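/- arXiv:1304.5648 — 4 statements merged into one kernel-verified Lean document; each statement's English description precedes it below -/
import Mathlib

section
/- Let G be a finite group and let i : X → Y, j : Y → Z and k : W → Z be maps of finite G-sets. Let P := Y ×_Z W with projections to Y and h : P → W, and let Q := X ×_Y P with projections to X and g : Q → P. Then base change along k of the exponential diagram for (i, j) is an exponential diagram for (g, h): the commutative diagram with bottom row Q →g P →h W, top row the base change of π₂ : Y ×_Z ∏_{i,j} X → ∏_{i,j} X along k, left vertical the base change of e and right vertical the base change of p, is an exponential diagram; in particular there is a canonical G-isomorphism ∏_{g,h} Q ≅ W ×_Z ∏_{i,j} X compatible with the structure maps. -/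
set_option autoImplicit false

namespace Tamb

variable {G : Type} [Group G]

/-- A function between `G`-sets is equivariant. -/
def IsEquivariant (G : Type) [Group G] {A B : Type} [SMul G A] [SMul G B] (f : A → B) : Prop :=
  ∀ (g : G) (a : A), f (g • a) = g • f a

section Maps

variable {X Y Z : Type} [MulAction G X] [MulAction G Y] [MulAction G Z]

/-- The identity equivariant map. -/
def gid (G X : Type) [Group G] [MulAction G X] : X →[G] X :=
  ⟨fun x => x, fun _ _ => rfl⟩

@[simp] theorem gid_apply (x : X) : gid G X x = x := rfl

/-- Composition of equivariant maps. -/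
def gcomp (j : Y →[G] Z) (i : X →[G] Y) : X →[G] Z :=
  ⟨fun x => j (i x), fun g x => by
    show j (i (g • x)) = g • j (i x)
    rw [MulActionHom.map_smul, MulActionHom.map_smul]⟩

@[simp] theorem gcomp_apply (j : Y →[G] Z) (i : X →[G] Y) (x : X) : gcomp j i x = j (i x) := rfl

/-- The pullback of two equivariant maps of `G`-sets. -/
def Pb (f : X →[G] Z) (g : Y →[G] Z) : Type := {p : X × Y // f p.1 = g p.2}

namespace Pb

variable (f : X →[G] Z) (g : Y →[G] Z)

instance : SMul G (Pb f g) :=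
  ⟨fun a p => ⟨(a • p.1.1, a • p.1.2), by
    rw [MulActionHom.map_smul, MulActionHom.map_smul, p.2]⟩⟩

instance : MulAction G (Pb f g) where
  one_smul p := Subtype.ext (Prod.ext (one_smul _ _) (one_smul _ _))
  mul_smul a b p := Subtype.ext (Prod.ext (mul_smul _ _ _) (mul_smul _ _ _))

instance [Finite X] [Finite Y] : Finite (Pb f g) := Subtype.finite

/-- First projection of a pullback. -/
def fstHom : Pb f g →[G] X := ⟨fun p => p.1.1, fun _ _ => rfl⟩
/-- Second projection of a pullback. -/
def sndHom : Pb f g →[G] Y := ⟨fun p => p.1.2, fun _ _ => rfl⟩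

@[simp] theorem fstHom_apply (p : Pb f g) : fstHom f g p = p.1.1 := rfl
@[simp] theorem sndHom_apply (p : Pb f g) : sndHom f g p = p.1.2 := rfl

end Pb

/-- `Sec i j` is the set `∏_{i,j} X` of sections of `i : X → Y` defined on fibers
of `j : Y → Z`: an element is a point `z : Z` together with a section of `i`
defined on `j⁻¹(z)`. -/
structure Sec (i : X →[G] Y) (j : Y →[G] Z) where
  pt : Z
  sec : ∀ y : Y, j y = pt → X
  isSec : ∀ (y : Y) (h : j y = pt), i (sec y h) = y

namespace Sec

variable {i : X →[G] Y} {j : Y →[G] Z}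

theorem ext' {σ τ : Sec i j} (h1 : σ.pt = τ.pt)
    (h2 : ∀ (y : Y) (h : j y = σ.pt) (h' : j y = τ.pt), σ.sec y h = τ.sec y h') : σ = τ := by
  obtain ⟨p, s, hs⟩ := σ
  obtain ⟨p', s', hs'⟩ := τ
  dsimp at h1
  subst h1
  have hss : s = s' := by
    funext y hy
    exact h2 y hy hy
  subst hss
  rfl

theorem sec_congr (σ : Sec i j) {y y' : Y} (e : y = y') {h : j y = σ.pt} {h' : j y' = σ.pt} :
    σ.sec y h = σ.sec y' h' := by subst e; rfl

instance : SMul G (Sec i j) :=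
  ⟨fun a σ =>
    { pt := a • σ.pt
      sec := fun y h => a • σ.sec (a⁻¹ • y) (by rw [MulActionHom.map_smul, h, inv_smul_smul])
      isSec := fun y h => by
        rw [MulActionHom.map_smul, σ.isSec, smul_inv_smul] }⟩

@[simp] theorem smul_pt (a : G) (σ : Sec i j) : (a • σ).pt = a • σ.pt := rfl

theorem smul_sec (a : G) (σ : Sec i j) (y : Y) (h : j y = (a • σ).pt)
    (h' : j (a⁻¹ • y) = σ.pt) : (a • σ).sec y h = a • σ.sec (a⁻¹ • y) h' := rfl

instance : MulAction G (Sec i j) where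
  one_smul σ := by
    refine ext' (one_smul _ _) (fun y h h' => ?_)
    have h'' : j ((1 : G)⁻¹ • y) = σ.pt := by rw [inv_one, one_smul]; exact h'
    rw [smul_sec 1 σ y h h'', one_smul]
    exact sec_congr σ (by rw [inv_one, one_smul])
  mul_smul a b σ := by
    refine ext' (mul_smul _ _ _) (fun y h h' => ?_)
    have h1 : j ((a * b)⁻¹ • y) = σ.pt := by
      rw [MulActionHom.map_smul, h]
      exact inv_smul_smul _ _
    have h2 : j (a⁻¹ • y) = (b • σ).pt := by
      rw [MulActionHom.map_smul, h']
      show a⁻¹ • (a • (b • σ).pt) = _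
      exact inv_smul_smul _ _
    have h3 : j (b⁻¹ • (a⁻¹ • y)) = σ.pt := by
      rw [MulActionHom.map_smul, h2]
      exact inv_smul_smul _ _
    rw [smul_sec (a * b) σ y h h1, smul_sec a (b • σ) y h' h2, smul_sec b σ (a⁻¹ • y) h2 h3,
      mul_smul]
    exact congrArg (a • ·) (congrArg (b • ·) (sec_congr σ (by rw [mul_inv_rev, mul_smul])))

instance optionFinite {X : Type} [Finite X] : Finite (Option X) :=
  Finite.of_equiv (X ⊕ PUnit.{1}) (Equiv.optionEquivSumPUnit.{0,0} X).symm

instance [Finite X] [Finite Y] [Finite Z] : Finite (Sec i j) := by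
  classical
  have hF : Function.Injective (fun σ : Sec i j =>
      ((σ.pt, fun y => if h : j y = σ.pt then some (σ.sec y h) else none) :
        Z × (Y → Option X))) := by
    intro σ τ he
    have h1 : σ.pt = τ.pt := congrArg Prod.fst he
    refine ext' h1 (fun y hy hy' => ?_)
    have h2 := congrFun (congrArg Prod.snd he) y
    dsimp only at h2
    rw [dif_pos hy, dif_pos hy'] at h2
    exact Option.some_injective _ h2
  exact Finite.of_injective _ hF

end Sec

/-- The canonical projection `∏_{i,j} X → Z`. -/
def pHom (i : X →[G] Y) (j : Y →[G] Z) : Sec i j →[G] Z :=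
  ⟨fun σ => σ.pt, fun _ _ => rfl⟩

@[simp] theorem pHom_apply (i : X →[G] Y) (j : Y →[G] Z) (σ : Sec i j) :
    pHom i j σ = σ.pt := rfl

/-- The canonical pullback `Y ×_Z ∏_{i,j} X`. -/
abbrev ECan (i : X →[G] Y) (j : Y →[G] Z) : Type := Pb j (pHom i j)

/-- The evaluation map `e : Y ×_Z ∏_{i,j} X → X`. -/
def eval (i : X →[G] Y) (j : Y →[G] Z) : ECan i j → X := fun q => q.1.2.sec q.1.1 q.2

theorem eval_smul (i : X →[G] Y) (j : Y →[G] Z) (a : G) (q : ECan i j) :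
    eval i j (a • q) = a • eval i j q := by
  have h1 : j (a • q.1.1) = (a • q.1.2).pt := by
    rw [MulActionHom.map_smul, q.2]; rfl
  have h2 : j (a⁻¹ • (a • q.1.1)) = q.1.2.pt := by rw [inv_smul_smul]; exact q.2
  calc eval i j (a • q) = (a • q.1.2).sec (a • q.1.1) h1 := rfl
    _ = a • q.1.2.sec (a⁻¹ • (a • q.1.1)) h2 := Sec.smul_sec _ _ _ _ _
    _ = a • q.1.2.sec q.1.1 q.2 := congrArg (a • ·) (Sec.sec_congr _ (inv_smul_smul a q.1.1))

/-- The evaluation map as an equivariant map. -/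
def evalHom (i : X →[G] Y) (j : Y →[G] Z) : ECan i j →[G] X :=
  ⟨eval i j, eval_smul i j⟩

/-- The projection `π₂ : Y ×_Z ∏_{i,j} X → ∏_{i,j} X` of the canonical exponential diagram. -/
def pi2Hom (i : X →[G] Y) (j : Y →[G] Z) : ECan i j →[G] Sec i j :=
  Pb.sndHom j (pHom i j)

end Maps

/-- `(f, g, h)` is a distributor for `(i, j)`: the diagram with bottom row
`X →i Y →j Z`, top row `g : A → B`, left vertical `f : A → X` and right vertical
`h : B → Z` is an exponential diagram, i.e. it is isomorphic (by equivariant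
bijections fixing the bottom row) to the canonical diagram built from `∏_{i,j} X`. -/
def IsDistributor {X Y Z A B : Type} [MulAction G X] [MulAction G Y] [MulAction G Z]
    [MulAction G A] [MulAction G B]
    (i : X →[G] Y) (j : Y →[G] Z) (f : A →[G] X) (g : A →[G] B) (h : B →[G] Z) : Prop :=
  ∃ (α : A ≃ ECan i j) (β : B ≃ Sec i j),
    IsEquivariant G ⇑α ∧ IsEquivariant G ⇑β ∧
    (∀ a, eval i j (α a) = f a) ∧
    (∀ a, β (g a) = (α a).1.2) ∧
    (∀ b, (β b).pt = h b)

end Tamb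

namespace Tamb

variable {G : Type} [Group G]

section Statement0

variable {X Y Z W : Type} [MulAction G X] [MulAction G Y] [MulAction G Z] [MulAction G W]
  [Finite X] [Finite Y] [Finite Z] [Finite W]

variable (i : X →[G] Y) (j : Y →[G] Z) (k : W →[G] Z)

/-- `P := Y ×_Z W`. -/
abbrev PBC : Type := Pb j k

/-- `h : P → W`. -/
def hBC : PBC j k →[G] W := Pb.sndHom j k

/-- `Q := X ×_Y P`. -/
abbrev QBC : Type := Pb i (Pb.fstHom j k)

/-- `g : Q → P`. -/
def gBC : QBC i j k →[G] PBC j k := Pb.sndHom i (Pb.fstHom j k)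

/-- The base change `(∏_{i,j} X) ×_Z W ≅ W ×_Z ∏_{i,j} X` of `∏_{i,j} X` along `k`. -/
abbrev SBC : Type := Pb (pHom i j) k

/-- The base change of the structure map `p : ∏_{i,j} X → Z` along `k`. -/
def pBC : SBC i j k →[G] W := Pb.sndHom (pHom i j) k

/-- The base change `(Y ×_Z ∏_{i,j} X) ×_Z W` of `Y ×_Z ∏_{i,j} X` along `k`. -/
abbrev EBC : Type := Pb (gcomp (pHom i j) (pi2Hom i j)) k

/-- The base change of the top map `π₂ : Y ×_Z ∏_{i,j} X → ∏_{i,j} X` along `k`. -/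
def tBC : EBC i j k →[G] SBC i j k :=
  ⟨fun q => ⟨(q.1.1.1.2, q.1.2), q.2⟩, fun _ _ => rfl⟩

/-- The base change of the evaluation map `e : Y ×_Z ∏_{i,j} X → X` along `k`,
viewed as a map to `Q = X ×_Y P`. -/
def lBC : EBC i j k →[G] QBC i j k :=
  ⟨fun q => ⟨(eval i j q.1.1, ⟨(q.1.1.1.1, q.1.2), q.1.1.2.trans q.2⟩),
      q.1.1.1.2.isSec q.1.1.1.1 q.1.1.2⟩,
   fun a q => by
    apply Subtype.ext
    apply Prod.ext
    · exact eval_smul i j a q.1.1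
    · apply Subtype.ext
      apply Prod.ext <;> rfl⟩

/-
Over a point `w : W`, the fibre of `h` is `j⁻¹(k w) × {w}` and the part of `Q = X ×_Y P` lying
over it is `i⁻¹(j⁻¹(k w))`. So a section of `g` over `h⁻¹(w)` is exactly a section of `i` over
`j⁻¹(k w)`, which identifies `∏_{g,h} Q` with `(∏_{i,j} X) ×_Z W` over `W`. Pulling the canonical
diagram for `(g, h)` back along this identification gives the base-changed diagram on the nose.
-/

section

omit [Finite X] [Finite Y] [Finite Z] [Finite W]

theorem IsEquivariant.symm {A B : Type} [SMul G A] [SMul G B] {e : A ≃ B}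
    (he : IsEquivariant G e) : IsEquivariant G e.symm := fun a b =>
  e.injective (by rw [e.apply_symm_apply, he, e.apply_symm_apply])

def sbcToSec (s : SBC i j k) : Sec (gBC i j k) (hBC j k) where
  pt := s.1.2
  sec p hp := ⟨(s.1.1.sec p.1.1 (p.2.trans (by rw [show p.1.2 = s.1.2 from hp]; exact s.2.symm)),
    p), s.1.1.isSec _ _⟩
  isSec _ _ := rfl

def secToSBC (τ : Sec (gBC i j k) (hBC j k)) : SBC i j k :=
  ⟨({ pt := k τ.pt
      sec := fun y hy => (τ.sec ⟨(y, τ.pt), hy⟩ rfl).1.1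
      isSec := fun y hy => (τ.sec ⟨(y, τ.pt), hy⟩ rfl).2.trans
        (congrArg (fun r : PBC j k => r.1.1) (τ.isSec ⟨(y, τ.pt), hy⟩ rfl)) },
    τ.pt), rfl⟩

theorem secToSBC_sbcToSec (s : SBC i j k) : secToSBC i j k (sbcToSec i j k s) = s :=
  Subtype.ext (Prod.ext (Sec.ext' s.2.symm fun _ _ _ => rfl) rfl)

theorem sbcToSec_secToSBC (τ : Sec (gBC i j k) (hBC j k)) :
    sbcToSec i j k (secToSBC i j k τ) = τ := by
  refine Sec.ext' rfl fun p _ hp => ?_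
  have hj : j p.1.1 = k τ.pt := p.2.trans (congrArg k hp)
  have hpe : (⟨(p.1.1, τ.pt), hj⟩ : PBC j k) = p := Subtype.ext (Prod.ext rfl hp.symm)
  refine Subtype.ext (Prod.ext ?_ (τ.isSec p hp).symm)
  show (τ.sec ⟨(p.1.1, τ.pt), hj⟩ rfl).1.1 = (τ.sec p hp).1.1
  rw [Sec.sec_congr τ (h := rfl) (h' := hp) hpe]

def sbcEquivSec : SBC i j k ≃ Sec (gBC i j k) (hBC j k) where
  toFun := sbcToSec i j k
  invFun := secToSBC i j k
  left_inv := secToSBC_sbcToSec i j k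
  right_inv := sbcToSec_secToSBC i j k

theorem sbcEquivSec_isEquivariant : IsEquivariant G (sbcEquivSec i j k) := by
  intro a s
  show sbcToSec i j k (a • s) = a • sbcToSec i j k s
  refine Sec.ext' rfl fun p _ hp => ?_
  have hinv : hBC j k (a⁻¹ • p) = (sbcToSec i j k s).pt := by
    show a⁻¹ • p.1.2 = s.1.2
    rw [show p.1.2 = a • s.1.2 from hp, inv_smul_smul]
  rw [Sec.smul_sec a (sbcToSec i j k s) p hp hinv]
  exact Subtype.ext (Prod.ext rfl (smul_inv_smul a p).symm)

def ebcToECan (q : EBC i j k) : ECan (gBC i j k) (hBC j k) :=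
  ⟨(⟨(q.1.1.1.1, q.1.2), q.1.1.2.trans q.2⟩, sbcToSec i j k ⟨(q.1.1.1.2, q.1.2), q.2⟩), rfl⟩

def ecanToEBC (r : ECan (gBC i j k) (hBC j k)) : EBC i j k :=
  ⟨(⟨(r.1.1.1.1, (secToSBC i j k r.1.2).1.1), r.1.1.2.trans (congrArg k r.2)⟩, r.1.1.1.2),
    (congrArg k r.2).symm⟩

def ebcEquivECan : EBC i j k ≃ ECan (gBC i j k) (hBC j k) where
  toFun := ebcToECan i j k
  invFun := ecanToEBC i j k
  left_inv q := Subtype.ext (Prod.ext (Subtype.ext (Prod.ext rfl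
    (congrArg (fun s : SBC i j k => s.1.1) (secToSBC_sbcToSec i j k ⟨(q.1.1.1.2, q.1.2), q.2⟩))))
    rfl)
  right_inv r := by
    have hs : (⟨((secToSBC i j k r.1.2).1.1, r.1.1.1.2), (congrArg k r.2).symm⟩ : SBC i j k) =
        secToSBC i j k r.1.2 := Subtype.ext (Prod.ext rfl r.2)
    refine Subtype.ext (Prod.ext (Subtype.ext rfl) ?_)
    exact (congrArg (sbcToSec i j k) hs).trans (sbcToSec_secToSBC i j k r.1.2)

theorem ebcEquivECan_isEquivariant : IsEquivariant G (ebcEquivECan i j k) := fun a q =>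
  Subtype.ext (Prod.ext (Subtype.ext rfl)
    (sbcEquivSec_isEquivariant i j k a ⟨(q.1.1.1.2, q.1.2), q.2⟩))

end

theorem statement0 :
    IsDistributor (gBC i j k) (hBC j k) (lBC i j k) (tBC i j k) (pBC i j k) ∧
    ∃ φ : Sec (gBC i j k) (hBC j k) ≃ SBC i j k,
      IsEquivariant G ⇑φ ∧ ∀ σ : Sec (gBC i j k) (hBC j k), pBC i j k (φ σ) = σ.pt :=
  ⟨⟨ebcEquivECan i j k, sbcEquivSec i j k, ebcEquivECan_isEquivariant i j k,
      sbcEquivSec_isEquivariant i j k, fun _ => rfl, fun _ => rfl, fun _ => rfl⟩,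
    (sbcEquivSec i j k).symm, (sbcEquivSec_isEquivariant i j k).symm, fun _ => rfl⟩

end Statement0

end Tamb
end

section
/- Let G be a finite group and M a semi-Mackey functor over G. The norm maps n_f defined on sT_0(M) descend to the quotient sT(M): for every G-map f : X → Y, if two elements of sT_0(M)(X) become equal in sT(M)(X), then their images under n_f become equal in sT(M)(Y). Consequently sT(M) carries induced norm maps. -/
set_option autoImplicit false

namespace Tamb

variable {G : Type} [Group G]

section CoreB

/-- A (bundled) finite `G`-set. -/
structure FinGSet (G : Type) [Group G] : Type 1 where
  carrier : Type
  [fin : Finite carrier]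
  [act : MulAction G carrier]

attribute [instance] FinGSet.fin FinGSet.act

instance : MulAction G Empty where
  smul _ e := e.elim
  one_smul e := e.elim
  mul_smul _ _ e := e.elim

/-- Bundle a finite `G`-set. -/
def mkG (G : Type) [Group G] (A : Type) [MulAction G A] [Finite A] : FinGSet G := ⟨A⟩

/-- The empty `G`-set. -/
def emptyG (G : Type) [Group G] : FinGSet G := ⟨Empty⟩
/-- The one-point `G`-set (`G/G`). -/
def ptG (G : Type) [Group G] : FinGSet G := ⟨PUnit⟩
/-- Binary coproduct of finite `G`-sets. -/
def sumG (X Y : FinGSet G) : FinGSet G := ⟨X.carrier ⊕ Y.carrier⟩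
/-- Binary product of finite `G`-sets. -/
def prodG (X Y : FinGSet G) : FinGSet G := ⟨X.carrier × Y.carrier⟩

def initHom (X : FinGSet G) : (emptyG G).carrier →[G] X.carrier :=
  ⟨fun e => e.elim, fun _ e => e.elim⟩
def toPtHom (X : FinGSet G) : X.carrier →[G] (ptG G).carrier :=
  ⟨fun _ => PUnit.unit, fun _ _ => rfl⟩
def inlHom (X Y : FinGSet G) : X.carrier →[G] (sumG X Y).carrier :=
  ⟨Sum.inl, fun _ _ => rfl⟩
def inrHom (X Y : FinGSet G) : Y.carrier →[G] (sumG X Y).carrier :=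
  ⟨Sum.inr, fun _ _ => rfl⟩
def sumMapHom {X Y X' Y' : FinGSet G} (f : X.carrier →[G] X'.carrier)
    (g : Y.carrier →[G] Y'.carrier) : (sumG X Y).carrier →[G] (sumG X' Y').carrier :=
  ⟨Sum.map f g, fun a x => by
    cases x with
    | inl v => show Sum.inl (f (a • v)) = Sum.inl (a • f v); rw [MulActionHom.map_smul]
    | inr v => show Sum.inr (g (a • v)) = Sum.inr (a • g v); rw [MulActionHom.map_smul]⟩
def sumElimHom {X Y Z : FinGSet G} (f : X.carrier →[G] Z.carrier)
    (g : Y.carrier →[G] Z.carrier) : (sumG X Y).carrier →[G] Z.carrier :=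
  ⟨Sum.elim f g, fun a x => by
    cases x with
    | inl v => show f (a • v) = a • f v; rw [MulActionHom.map_smul]
    | inr v => show g (a • v) = a • g v; rw [MulActionHom.map_smul]⟩
/-- The fold map `X ⊔ X → X`. -/
def foldHom (X : FinGSet G) : (sumG X X).carrier →[G] X.carrier :=
  sumElimHom (gid G X.carrier) (gid G X.carrier)
def prodMapHom {X Y X' Y' : FinGSet G} (f : X.carrier →[G] X'.carrier)
    (g : Y.carrier →[G] Y'.carrier) : (prodG X Y).carrier →[G] (prodG X' Y').carrier :=
  ⟨Prod.map f g, fun a x => Prod.ext (MulActionHom.map_smul f a x.1) (MulActionHom.map_smul g a x.2)⟩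
def pi1Hom (X Y : FinGSet G) : (prodG X Y).carrier →[G] X.carrier :=
  ⟨Prod.fst, fun _ _ => rfl⟩
def pi2ProdHom (X Y : FinGSet G) : (prodG X Y).carrier →[G] Y.carrier :=
  ⟨Prod.snd, fun _ _ => rfl⟩

/-- A semi-Mackey functor over `G` (with set values): restrictions and transfers,
functorial, converting coproducts into products, and satisfying the pullback
(Mackey double coset) condition. -/
structure SemiMackey (G : Type) [Group G] : Type 2 where
  obj : FinGSet G → Type 1
  nonempty : ∀ X, Nonempty (obj X)
  res : ∀ {X Y : FinGSet G}, (X.carrier →[G] Y.carrier) → obj Y → obj X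
  tr : ∀ {X Y : FinGSet G}, (X.carrier →[G] Y.carrier) → obj X → obj Y
  res_id : ∀ {X : FinGSet G} (x : obj X), res (gid G X.carrier) x = x
  res_comp : ∀ {X Y Z : FinGSet G} (i : X.carrier →[G] Y.carrier)
    (j : Y.carrier →[G] Z.carrier) (z : obj Z), res i (res j z) = res (gcomp j i) z
  tr_id : ∀ {X : FinGSet G} (x : obj X), tr (gid G X.carrier) x = x
  tr_comp : ∀ {X Y Z : FinGSet G} (i : X.carrier →[G] Y.carrier)
    (j : Y.carrier →[G] Z.carrier) (x : obj X), tr j (tr i x) = tr (gcomp j i) x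
  mackey : ∀ {X Y Z : FinGSet G} (j : X.carrier →[G] Z.carrier)
    (i : Y.carrier →[G] Z.carrier) (y : obj Y),
    res j (tr i y) =
      tr (X := mkG G (Pb j i)) (Pb.fstHom j i) (res (X := mkG G (Pb j i)) (Pb.sndHom j i) y)
  sum_bij : ∀ (X Y : FinGSet G),
    Function.Bijective (fun z : obj (sumG X Y) => (res (inlHom X Y) z, res (inrHom X Y) z))
  empty_subsingleton : Subsingleton (obj (emptyG G))

/-- A semi-Tambara functor over `G`: a semi-Mackey functor with multiplicative
norms, commuting with restrictions over pullbacks and satisfying the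
distributive law over exponential diagrams. -/
structure SemiTambara (G : Type) [Group G] extends SemiMackey G : Type 2 where
  nm : ∀ {X Y : FinGSet G}, (X.carrier →[G] Y.carrier) → obj X → obj Y
  nm_id : ∀ {X : FinGSet G} (x : obj X), nm (gid G X.carrier) x = x
  nm_comp : ∀ {X Y Z : FinGSet G} (i : X.carrier →[G] Y.carrier)
    (j : Y.carrier →[G] Z.carrier) (x : obj X), nm j (nm i x) = nm (gcomp j i) x
  nm_res : ∀ {X Y Z : FinGSet G} (j : X.carrier →[G] Z.carrier)
    (i : Y.carrier →[G] Z.carrier) (y : obj Y),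
    res j (nm i y) =
      nm (X := mkG G (Pb j i)) (Pb.fstHom j i) (res (X := mkG G (Pb j i)) (Pb.sndHom j i) y)
  distrib : ∀ {X Y Z A B : FinGSet G} (i : X.carrier →[G] Y.carrier)
    (j : Y.carrier →[G] Z.carrier) (f : A.carrier →[G] X.carrier)
    (g : A.carrier →[G] B.carrier) (h : B.carrier →[G] Z.carrier),
    IsDistributor i j f g h → ∀ x : obj X, nm j (tr i x) = tr h (nm g (res f x))

/-- The element of `M(X ⊔ Y)` corresponding to a pair `(x, y)`. -/
noncomputable def SemiMackey.pairElt (M : SemiMackey G) {X Y : FinGSet G}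
    (x : M.obj X) (y : M.obj Y) : M.obj (sumG X Y) :=
  (Equiv.ofBijective _ (M.sum_bij X Y)).symm (x, y)

/-- The addition on `M(X)` induced by transfer along the fold map. -/
noncomputable def SemiMackey.add (M : SemiMackey G) {X : FinGSet G} (x y : M.obj X) : M.obj X :=
  M.tr (foldHom X) (M.pairElt x y)

/-- The zero of `M(X)`: the transfer of the unique element of `M(∅)`. -/
noncomputable def SemiMackey.zero (M : SemiMackey G) (X : FinGSet G) : M.obj X :=
  M.tr (initHom X) (M.nonempty (emptyG G)).some

/-- The multiplication on `R(X)` induced by the norm along the fold map. -/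
noncomputable def SemiTambara.mul (R : SemiTambara G) {X : FinGSet G} (x y : R.obj X) :
    R.obj X :=
  R.nm (foldHom X) (R.toSemiMackey.pairElt x y)

/-- The multiplicative unit of `R(X)`: the norm of the unique element of `R(∅)`. -/
noncomputable def SemiTambara.one (R : SemiTambara G) (X : FinGSet G) : R.obj X :=
  R.nm (initHom X) (R.nonempty (emptyG G)).some

/-- A Mackey functor: a semi-Mackey functor all of whose values are abelian
groups under the transfer-induced addition. -/
structure Mackey (G : Type) [Group G] extends SemiMackey G : Type 2 where
  hasNeg : ∀ (X : FinGSet G) (x : obj X), ∃ y, toSemiMackey.add x y = toSemiMackey.zero X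

/-- A Tambara functor: a semi-Tambara functor all of whose values are abelian
groups under the transfer-induced addition. -/
structure Tambara (G : Type) [Group G] extends SemiTambara G : Type 2 where
  hasNeg : ∀ (X : FinGSet G) (x : obj X),
    ∃ y, toSemiMackey.add x y = toSemiMackey.zero X

/-- A map of semi-Mackey functors. -/
structure SMackHom {G : Type} [Group G] (M N : SemiMackey G) : Type 1 where
  app : ∀ X, M.obj X → N.obj X
  app_res : ∀ {X Y : FinGSet G} (f : X.carrier →[G] Y.carrier) (y : M.obj Y),
    app X (M.res f y) = N.res f (app Y y)
  app_tr : ∀ {X Y : FinGSet G} (f : X.carrier →[G] Y.carrier) (x : M.obj X),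
    app Y (M.tr f x) = N.tr f (app X x)

/-- A map of semi-Tambara functors. -/
structure STambHom {G : Type} [Group G] (M N : SemiTambara G) extends
    SMackHom M.toSemiMackey N.toSemiMackey : Type 1 where
  app_nm : ∀ {X Y : FinGSet G} (f : X.carrier →[G] Y.carrier) (x : M.obj X),
    app Y (M.nm f x) = N.nm f (app X x)

/-- A formal "transfer of a norm of an element of `M`": a pair
`(U →i V →j X, u ∈ M(U))`. -/
structure PreT {G : Type} [Group G] (M : SemiMackey G) (X : FinGSet G) : Type 1 where
  U : FinGSet G
  V : FinGSet G
  i : U.carrier →[G] V.carrier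
  j : V.carrier →[G] X.carrier
  u : M.obj U

/-- Two pairs are isomorphic. -/
def IsoRel (M : SemiMackey G) (X : FinGSet G) (a b : PreT M X) : Prop :=
  ∃ (f : b.U.carrier ≃ a.U.carrier) (g : b.V.carrier ≃ a.V.carrier)
    (hf : IsEquivariant G ⇑f) (_ : IsEquivariant G ⇑g),
    (∀ u' : b.U.carrier, a.i (f u') = g (b.i u')) ∧
    (∀ v' : b.V.carrier, a.j (g v') = b.j v') ∧
    M.res (MulActionHom.mk ⇑f hf) a.u = b.u

/-- The relation defining the free semi-Tambara functor `sT(M)`: pairs are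
identified up to isomorphism and the distributive-law relation. -/
inductive STRel (M : SemiMackey G) (X : FinGSet G) : PreT M X → PreT M X → Prop
  | iso {a b : PreT M X} : IsoRel M X a b → STRel M X a b
  | distrib {W U V A B : FinGSet G} (k : W.carrier →[G] U.carrier)
      (i : U.carrier →[G] V.carrier) (j : V.carrier →[G] X.carrier)
      (f : A.carrier →[G] W.carrier) (g : A.carrier →[G] B.carrier)
      (h : B.carrier →[G] V.carrier) :
      IsDistributor k i f g h → ∀ w : M.obj W,
      STRel M X ⟨U, V, i, j, M.tr k w⟩ ⟨A, B, g, gcomp j h, M.res f w⟩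

/-- The value of the free semi-Tambara functor on `M` at `X`. -/
def sT (M : SemiMackey G) (X : FinGSet G) : Type 1 := Quot (STRel M X)

/-- The universal map `θ_M : M → sT(M)`, at the level of representatives. -/
def thetaPre (M : SemiMackey G) (X : FinGSet G) (x : M.obj X) : PreT M X :=
  ⟨X, X, gid G X.carrier, gid G X.carrier, x⟩

/-- Transfer on representatives: postcomposition. -/
def trPre (M : SemiMackey G) {X Y : FinGSet G} (f : X.carrier →[G] Y.carrier)
    (a : PreT M X) : PreT M Y :=
  ⟨a.U, a.V, a.i, gcomp f a.j, a.u⟩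

/-- Restriction on representatives: pull back both maps. -/
def resPre (M : SemiMackey G) {X Y : FinGSet G} (f : Y.carrier →[G] X.carrier)
    (a : PreT M X) : PreT M Y where
  U := mkG G (Pb a.i (Pb.fstHom a.j f))
  V := mkG G (Pb a.j f)
  i := Pb.sndHom a.i (Pb.fstHom a.j f)
  j := Pb.sndHom a.j f
  u := M.res (X := mkG G (Pb a.i (Pb.fstHom a.j f))) (Pb.fstHom a.i (Pb.fstHom a.j f)) a.u

/-- Norm on representatives, via the canonical exponential diagram for `(j, f)`. -/
def normPre (M : SemiMackey G) {X Y : FinGSet G} (f : X.carrier →[G] Y.carrier)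
    (a : PreT M X) : PreT M Y where
  U := mkG G (Pb a.i (evalHom a.j f))
  V := mkG G (Sec a.j f)
  i := gcomp (pi2Hom a.j f) (Pb.sndHom a.i (evalHom a.j f))
  j := pHom a.j f
  u := M.res (X := mkG G (Pb a.i (evalHom a.j f))) (Pb.fstHom a.i (evalHom a.j f)) a.u

/-- Addition on representatives: disjoint union. -/
noncomputable def addPre (M : SemiMackey G) {X : FinGSet G} (a b : PreT M X) : PreT M X where
  U := sumG a.U b.U
  V := sumG a.V b.V
  i := sumMapHom a.i b.i
  j := sumElimHom a.j b.j
  u := M.pairElt a.u b.u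

/-- A pair has (pure) degree `n` if every fiber of its first map has exactly `n`
elements. -/
def DegN {M : SemiMackey G} {X : FinGSet G} (n : ℕ) (a : PreT M X) : Prop :=
  ∀ v : a.V.carrier, Nat.card {u : a.U.carrier // a.i u = v} = n

/-- A finite `G`-set over `X` (a representative for the Burnside semi-Mackey functor). -/
structure BurnPre (G : Type) [Group G] (X : FinGSet G) : Type 1 where
  A : FinGSet G
  f : A.carrier →[G] X.carrier

/-- Isomorphism of finite `G`-sets over `X`. -/
def BurnIso {X : FinGSet G} (s t : BurnPre G X) : Prop :=
  ∃ (e : s.A.carrier ≃ t.A.carrier) (_ : IsEquivariant G ⇑e), ∀ x, t.f (e x) = s.f x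

/-- The pair `(∅ → A →f X, 0)` associated to a `G`-set over `X`. -/
noncomputable def bPair (M : SemiMackey G) {X : FinGSet G} (s : BurnPre G X) : PreT M X :=
  ⟨emptyG G, s.A, initHom s.A, s.f, (M.nonempty (emptyG G)).some⟩

end CoreB



/-!
The norm respects both generating relations of `sT(M)`. Isomorphic pairs have isomorphic norms,
since `∏_{j,f}` and the pullback defining `n_f` are functorial in isomorphisms over `X`.
For the distributive relation, the Mackey condition writes the norm of `(U →i V →j X, t_k w)` as
a pair whose element is again a transfer `t_{k'}(r w)`, so the distributive relation applies to
it once more. The result is isomorphic to the norm of the right-hand side because exponential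
diagrams compose: a section over a fibre of `f` of sections of `k` over fibres of `i` is the same
as a section `ρ` of `j` over that fibre together with a section of `k'` over the fibre of `ρ`.
-/

theorem IsEquivariant.equiv_symm {A B : Type} [MulAction G A] [MulAction G B] {e : A ≃ B}
    (h : IsEquivariant G ⇑e) : IsEquivariant G ⇑e.symm := fun g b =>
  e.injective (by rw [Equiv.apply_symm_apply, h, Equiv.apply_symm_apply])

theorem SemiMackey.res_res_eq_of_comp (M : SemiMackey G) {A B C : FinGSet G}
    {α : A.carrier →[G] B.carrier} {φ : B.carrier →[G] C.carrier} {ψ : A.carrier →[G] C.carrier}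
    (h : ∀ a, φ (α a) = ψ a) (c : M.obj C) : M.res α (M.res φ c) = M.res ψ c := by
  rw [M.res_comp]
  exact congrArg (M.res · c) (DFunLike.ext _ _ h)

abbrev NormU {U V X Y : Type} [MulAction G U] [MulAction G V] [MulAction G X] [MulAction G Y]
    (i : U →[G] V) (j : V →[G] X) (f : X →[G] Y) : Type :=
  Pb i (evalHom j f)

section Sections

variable {X Y Z : Type} [MulAction G X] [MulAction G Y] [MulAction G Z]

theorem Sec.sec_eq_of_eq {i : X →[G] Y} {j : Y →[G] Z} {σ τ : Sec i j} (e : σ = τ) {y : Y}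
    (h : j y = σ.pt) (h' : j y = τ.pt) : σ.sec y h = τ.sec y h' := by
  subst e; rfl

theorem isDistributor_canonical (i : X →[G] Y) (j : Y →[G] Z) :
    IsDistributor i j (evalHom i j) (pi2Hom i j) (pHom i j) :=
  ⟨Equiv.refl _, Equiv.refl _, fun _ _ => rfl, fun _ _ => rfl, fun _ => rfl, fun _ => rfl,
    fun _ => rfl⟩

variable {V V' : Type} [MulAction G V] [MulAction G V'] {j : V →[G] X} {j' : V' →[G] X}
  {f : X →[G] Y}

def Sec.map (g : V' → V) (hg : ∀ v, j (g v) = j' v) (σ : Sec j' f) : Sec j f where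
  pt := σ.pt
  sec x h := g (σ.sec x h)
  isSec x h := (hg _).trans (σ.isSec x h)

theorem Sec.isEquivariant_map {g : V' → V} (hg : IsEquivariant G g)
    (hj : ∀ v, j (g v) = j' v) : IsEquivariant G (Sec.map (f := f) g hj) :=
  fun a _ => Sec.ext' rfl fun _ _ _ => hg a _

theorem comp_symm_eq_of_comp_eq {g : V' ≃ V} (hg : ∀ v, j (g v) = j' v) (v : V) :
    j' (g.symm v) = j v := by
  rw [← hg, Equiv.apply_symm_apply]

def Sec.mapEquiv (g : V' ≃ V) (hg : ∀ v, j (g v) = j' v) : Sec j' f ≃ Sec j f where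
  toFun := Sec.map g hg
  invFun := Sec.map g.symm (comp_symm_eq_of_comp_eq hg)
  left_inv _ := Sec.ext' rfl fun _ _ _ => g.symm_apply_apply _
  right_inv _ := Sec.ext' rfl fun _ _ _ => g.apply_symm_apply _

variable {U U' : Type} [MulAction G U] [MulAction G U'] {i : U →[G] V} {i' : U' →[G] V'}

def NormU.map (e : U' → U) (g : V' ≃ V) (hg : ∀ v, j (g v) = j' v)
    (he : ∀ u, i (e u) = g (i' u)) (p : NormU i' j' f) : NormU i j f :=
  ⟨(e p.1.1, ⟨(p.1.2.1.1, Sec.map (f := f) g hg p.1.2.1.2), p.1.2.2⟩),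
    (he p.1.1).trans (congrArg g p.2)⟩

theorem NormU.isEquivariant_map {e : U' → U} (he : IsEquivariant G e) {g : V' ≃ V}
    (hg : IsEquivariant G ⇑g) (hgj : ∀ v, j (g v) = j' v) (hei : ∀ u, i (e u) = g (i' u)) :
    IsEquivariant G (NormU.map (f := f) e g hgj hei) := fun a _ =>
  Subtype.ext (Prod.ext (he a _)
    (Subtype.ext (Prod.ext rfl (Sec.isEquivariant_map (f := f) hg hgj a _))))

def NormU.mapEquiv (e : U' ≃ U) (g : V' ≃ V) (hg : ∀ v, j (g v) = j' v)
    (he : ∀ u, i (e u) = g (i' u)) : NormU i' j' f ≃ NormU i j f where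
  toFun := NormU.map e g hg he
  invFun := NormU.map e.symm g.symm (comp_symm_eq_of_comp_eq hg) fun u => g.injective (by
    rw [Equiv.apply_symm_apply, ← he, Equiv.apply_symm_apply])
  left_inv p := Subtype.ext (Prod.ext (e.symm_apply_apply _)
    (Subtype.ext (Prod.ext rfl ((Sec.mapEquiv (f := f) g hg).symm_apply_apply _))))
  right_inv p := Subtype.ext (Prod.ext (e.apply_symm_apply _)
    (Subtype.ext (Prod.ext rfl ((Sec.mapEquiv (f := f) g hg).apply_symm_apply _))))

end Sections

theorem IsoRel.normPre {M : SemiMackey G} {X Y : FinGSet G} {a b : PreT M X}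
    (h : IsoRel M X a b) (f : X.carrier →[G] Y.carrier) :
    IsoRel M Y (normPre M f a) (normPre M f b) := by
  obtain ⟨e, g, he, hg, hei, hgj, hu⟩ := h
  refine ⟨NormU.mapEquiv e g hgj hei, Sec.mapEquiv g hgj, NormU.isEquivariant_map he hg hgj hei,
    Sec.isEquivariant_map hg hgj, fun _ => rfl, fun _ => rfl, ?_⟩
  show M.res _ (M.res _ a.u) = M.res _ b.u
  rw [← hu]
  exact (M.res_comp _ _ _).trans (M.res_res_eq_of_comp (fun _ => rfl) _).symm

section NormOfTransfer

variable {W U V X Y : Type} [MulAction G W] [MulAction G U] [MulAction G V] [MulAction G X]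
  [MulAction G Y]
variable (k : W →[G] U) (i : U →[G] V) (j : V →[G] X) (f : X →[G] Y)

/- By the Mackey condition, `normPre M f ⟨U, V, i, j, t_k w⟩` is
`⟨NormU i j f, Sec j f, normI i j f, pHom j f, t_{normK k i j f} (r w)⟩`. -/

abbrev NormW : Type := Pb (Pb.fstHom i (evalHom j f)) k

abbrev normK : NormW k i j f →[G] NormU i j f := Pb.fstHom (Pb.fstHom i (evalHom j f)) k

abbrev normI : NormU i j f →[G] Sec j f := gcomp (pi2Hom j f) (Pb.sndHom i (evalHom j f))

def NormU.mk (u : U) (x : X) (ρ : Sec j f) (hx : f x = ρ.pt) (hu : i u = ρ.sec x hx) :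
    NormU i j f := ⟨(u, ⟨(x, ρ), hx⟩), hu⟩

variable {k i j f}

def Sec.ofNormSec (S : Sec (normK k i j f) (normI i j f)) : Sec (gcomp j (pHom k i)) f where
  pt := S.pt.pt
  sec x hx :=
    { pt := S.pt.sec x hx
      sec := fun u hu => (S.sec (NormU.mk i j f u x S.pt hx hu) rfl).1.2
      isSec := fun u hu =>
        (S.sec (NormU.mk i j f u x S.pt hx hu) rfl).2.symm.trans
          (congrArg (fun q : NormU i j f => q.1.1) (S.isSec (NormU.mk i j f u x S.pt hx hu) rfl)) }
  isSec x hx := S.pt.isSec x hx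

def Sec.toNormSec (T : Sec (gcomp j (pHom k i)) f) : Sec (normK k i j f) (normI i j f) where
  pt := Sec.map (pHom k i) (fun _ => rfl) T
  sec p hp :=
    let σ := T.sec p.1.2.1.1 (p.1.2.2.trans (congrArg Sec.pt hp))
    have hu : i p.1.1 = σ.pt := p.2.trans (Sec.sec_eq_of_eq hp _ _)
    ⟨(p, σ.sec p.1.1 hu), (σ.isSec p.1.1 hu).symm⟩
  isSec _ _ := rfl

theorem Sec.map_ofNormSec (S : Sec (normK k i j f) (normI i j f)) :
    Sec.map (pHom k i) (fun _ => rfl) S.ofNormSec = S.pt :=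
  Sec.ext' rfl fun _ _ _ => rfl

theorem Sec.ofNormSec_toNormSec (T : Sec (gcomp j (pHom k i)) f) : T.toNormSec.ofNormSec = T :=
  Sec.ext' rfl fun _ _ _ => Sec.ext' rfl fun _ _ _ => rfl

theorem Sec.toNormSec_ofNormSec (S : Sec (normK k i j f) (normI i j f)) :
    S.ofNormSec.toNormSec = S := by
  refine Sec.ext' (Sec.map_ofNormSec S) fun p _ hp' => ?_
  refine Subtype.ext (Prod.ext (S.isSec p hp').symm ?_)
  have hx : f p.1.2.1.1 = S.pt.pt := p.1.2.2.trans (congrArg Sec.pt hp')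
  have hu : i p.1.1 = S.pt.sec p.1.2.1.1 hx := p.2.trans (Sec.sec_eq_of_eq hp' p.1.2.2 hx)
  have hp : NormU.mk i j f p.1.1 p.1.2.1.1 S.pt hx hu = p :=
    Subtype.ext (Prod.ext rfl (Subtype.ext (Prod.ext rfl hp'.symm)))
  show (S.sec (NormU.mk i j f p.1.1 p.1.2.1.1 S.pt hx hu) rfl).1.2 = (S.sec p hp').1.2
  exact congrArg (fun q : NormW k i j f => q.1.2) (Sec.sec_congr S hp)

theorem Sec.isEquivariant_ofNormSec :
    IsEquivariant G (Sec.ofNormSec (k := k) (i := i) (j := j) (f := f)) := by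
  intro a S
  refine Sec.ext' rfl fun x hx hx' => Sec.ext' rfl fun u hu _ => ?_
  have hx₁ : f (a⁻¹ • x) = S.ofNormSec.pt := by
    rw [MulActionHom.map_smul, hx']
    exact inv_smul_smul a _
  have hu₁ : i (a⁻¹ • u) = (S.ofNormSec.sec (a⁻¹ • x) hx₁).pt := by
    rw [MulActionHom.map_smul, hu]
    exact inv_smul_smul a _
  have hp : a⁻¹ • NormU.mk i j f u x (a • S).pt hx hu
      = NormU.mk i j f (a⁻¹ • u) (a⁻¹ • x) S.pt hx₁ hu₁ :=
    Subtype.ext (Prod.ext rfl (Subtype.ext (Prod.ext rfl (inv_smul_smul a S.pt))))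
  exact congrArg (fun q : NormW k i j f => q.1.2)
    ((Sec.smul_sec a S _ rfl (inv_smul_smul a S.pt)).trans
      (congrArg (a • ·) (Sec.sec_congr S hp)))

/-- A section of `j ∘ pHom k i` over a fibre of `f` picks over each `x` a point of `V` and a
section of `k` over its `i`-fibre; that is a section `ρ` of `j` over the fibre together with a
section of `normK` over the `normI`-fibre of `ρ`. -/
def normSecEquiv : Sec (gcomp j (pHom k i)) f ≃ Sec (normK k i j f) (normI i j f) where
  toFun := Sec.toNormSec
  invFun := Sec.ofNormSec
  left_inv := Sec.ofNormSec_toNormSec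
  right_inv := Sec.toNormSec_ofNormSec

theorem isEquivariant_normSecEquiv :
    IsEquivariant G ⇑(normSecEquiv (k := k) (i := i) (j := j) (f := f)) :=
  IsEquivariant.equiv_symm (e := normSecEquiv.symm) Sec.isEquivariant_ofNormSec

def ofNormEval (c : ECan (normK k i j f) (normI i j f)) :
    Pb (pi2Hom k i) (evalHom (gcomp j (pHom k i)) f) :=
  ⟨(⟨(c.1.1.1.1, c.1.2.ofNormSec.sec c.1.1.1.2.1.1 (c.1.1.1.2.2.trans (congrArg Sec.pt c.2))),
      c.1.1.2.trans (Sec.sec_eq_of_eq c.2 c.1.1.1.2.2 _)⟩,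
    ⟨(c.1.1.1.2.1.1, c.1.2.ofNormSec), c.1.1.1.2.2.trans (congrArg Sec.pt c.2)⟩), rfl⟩

def toNormEval (d : Pb (pi2Hom k i) (evalHom (gcomp j (pHom k i)) f)) :
    ECan (normK k i j f) (normI i j f) :=
  ⟨(⟨(d.1.1.1.1, ⟨(d.1.2.1.1, Sec.map (pHom k i) (fun _ => rfl) d.1.2.1.2), d.1.2.2⟩),
      d.1.1.2.trans (congrArg Sec.pt d.2)⟩, d.1.2.1.2.toNormSec), rfl⟩

theorem ofNormEval_toNormEval (d : Pb (pi2Hom k i) (evalHom (gcomp j (pHom k i)) f)) :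
    ofNormEval (toNormEval d) = d := by
  refine Subtype.ext (Prod.ext (Subtype.ext (Prod.ext rfl ?_))
    (Subtype.ext (Prod.ext rfl (Sec.ofNormSec_toNormSec d.1.2.1.2))))
  exact (Sec.sec_eq_of_eq (Sec.ofNormSec_toNormSec d.1.2.1.2) _ d.1.2.2).trans d.2.symm

theorem toNormEval_ofNormEval (c : ECan (normK k i j f) (normI i j f)) :
    toNormEval (ofNormEval c) = c :=
  Subtype.ext (Prod.ext (Subtype.ext (Prod.ext rfl (Subtype.ext (Prod.ext rfl
    ((Sec.map_ofNormSec c.1.2).trans c.2.symm))))) (Sec.toNormSec_ofNormSec c.1.2))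

def normEvalEquiv :
    Pb (pi2Hom k i) (evalHom (gcomp j (pHom k i)) f) ≃ ECan (normK k i j f) (normI i j f) where
  toFun := toNormEval
  invFun := ofNormEval
  left_inv := ofNormEval_toNormEval
  right_inv := toNormEval_ofNormEval

theorem isEquivariant_ofNormEval :
    IsEquivariant G (ofNormEval (k := k) (i := i) (j := j) (f := f)) := by
  intro a c
  have hx : f (a • c.1.1.1.2.1.1) = (a • c.1.2.ofNormSec).pt :=
    (f.map_smul a _).trans (congrArg (a • ·) (c.1.1.1.2.2.trans (congrArg Sec.pt c.2)))
  have hx₁ : f (a⁻¹ • (a • c.1.1.1.2.1.1)) = c.1.2.ofNormSec.pt := by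
    rw [inv_smul_smul]
    exact c.1.1.1.2.2.trans (congrArg Sec.pt c.2)
  refine Subtype.ext (Prod.ext (Subtype.ext (Prod.ext rfl ?_)) (Subtype.ext (Prod.ext rfl
    (Sec.isEquivariant_ofNormSec a c.1.2))))
  refine (Sec.sec_eq_of_eq (Sec.isEquivariant_ofNormSec a c.1.2) _ hx).trans ?_
  exact (Sec.smul_sec a _ _ hx hx₁).trans
    (congrArg (a • ·) (Sec.sec_congr _ (inv_smul_smul a _)))

theorem isEquivariant_normEvalEquiv :
    IsEquivariant G ⇑(normEvalEquiv (k := k) (i := i) (j := j) (f := f)) :=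
  IsEquivariant.equiv_symm (e := normEvalEquiv.symm) isEquivariant_ofNormEval

end NormOfTransfer

/-- The right-hand side of the distributive relation for `W →k U →i V →j X` and `w ∈ M(W)`,
computed with the canonical exponential diagram of `(k, i)`. -/
def distribPre (M : SemiMackey G) {W U V X : FinGSet G} (k : W.carrier →[G] U.carrier)
    (i : U.carrier →[G] V.carrier) (j : V.carrier →[G] X.carrier) (w : M.obj W) : PreT M X :=
  ⟨mkG G (ECan k i), mkG G (Sec k i), pi2Hom k i, gcomp j (pHom k i),
    M.res (X := mkG G (ECan k i)) (evalHom k i) w⟩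

theorem STRel.distribPre (M : SemiMackey G) {W U V X : FinGSet G} (k : W.carrier →[G] U.carrier)
    (i : U.carrier →[G] V.carrier) (j : V.carrier →[G] X.carrier) (w : M.obj W) :
    STRel M X ⟨U, V, i, j, M.tr k w⟩ (distribPre M k i j w) :=
  .distrib (A := mkG G (ECan k i)) (B := mkG G (Sec k i)) k i j _ _ _
    (isDistributor_canonical k i) w

theorem IsoRel.distribPre_of_isDistributor (M : SemiMackey G) {W U V X A B : FinGSet G}
    {k : W.carrier →[G] U.carrier} {i : U.carrier →[G] V.carrier} (j : V.carrier →[G] X.carrier)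
    {f : A.carrier →[G] W.carrier} {g : A.carrier →[G] B.carrier} {h : B.carrier →[G] V.carrier}
    (hd : IsDistributor k i f g h) (w : M.obj W) :
    IsoRel M X (distribPre M k i j w) ⟨A, B, g, gcomp j h, M.res f w⟩ := by
  obtain ⟨α, β, hα, hβ, hαf, hβg, hβh⟩ := hd
  exact ⟨α, β, hα, hβ, fun a => (hβg a).symm, fun b => congrArg j (hβh b),
    M.res_res_eq_of_comp hαf w⟩

theorem normPre_tr (M : SemiMackey G) {W U V X Y : FinGSet G}
    (k : W.carrier →[G] U.carrier) (i : U.carrier →[G] V.carrier)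
    (j : V.carrier →[G] X.carrier) (f : X.carrier →[G] Y.carrier) (w : M.obj W) :
    Quot.mk (STRel M Y) (normPre M f ⟨U, V, i, j, M.tr k w⟩) =
      Quot.mk (STRel M Y) (normPre M f (distribPre M k i j w)) := by
  have mackey : normPre M f ⟨U, V, i, j, M.tr k w⟩ =
      ⟨mkG G (NormU i j f), mkG G (Sec j f), normI i j f, pHom j f,
        M.tr (X := mkG G (NormW k i j f)) (Y := mkG G (NormU i j f)) (normK k i j f)
          (M.res (X := mkG G (NormW k i j f)) (Pb.sndHom _ k) w)⟩ :=
    congrArg (PreT.mk _ _ _ _) (M.mackey (X := mkG G (NormU i j f)) _ k w)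
  rw [mackey]
  refine (Quot.sound (STRel.distribPre M (W := mkG G (NormW k i j f)) (U := mkG G (NormU i j f))
    (V := mkG G (Sec j f)) _ _ _ _)).trans (Quot.sound (.iso ?_))
  refine ⟨normEvalEquiv, normSecEquiv, isEquivariant_normEvalEquiv, isEquivariant_normSecEquiv,
    fun _ => rfl, fun _ => rfl, ?_⟩
  refine (congrArg _ (M.res_comp _ _ w)).trans
    ((M.res_res_eq_of_comp (fun d => ?_) w).trans (M.res_comp _ _ w).symm)
  exact (Sec.sec_eq_of_eq d.2 d.1.1.2 (d.1.1.2.trans (congrArg Sec.pt d.2))).symm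

theorem normPre_sound (M : SemiMackey G) {X Y : FinGSet G} (f : X.carrier →[G] Y.carrier)
    {a b : PreT M X} (hab : STRel M X a b) :
    Quot.mk (STRel M Y) (normPre M f a) = Quot.mk (STRel M Y) (normPre M f b) := by
  cases hab with
  | iso h => exact Quot.sound (.iso (h.normPre f))
  | distrib k i j _ _ _ hd w =>
    exact (normPre_tr M k i j f w).trans
      (Quot.sound (.iso ((IsoRel.distribPre_of_isDistributor M j hd w).normPre f)))

namespace Tamb

variable {G : Type} [Group G]

theorem statement3_general (M : SemiMackey G) {X Y : FinGSet G}
    (f : X.carrier →[G] Y.carrier) :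
    (∀ a b : PreT M X, Quot.mk (STRel M X) a = Quot.mk (STRel M X) b →
      Quot.mk (STRel M Y) (normPre M f a) = Quot.mk (STRel M Y) (normPre M f b)) ∧
    ∃ n : sT M X → sT M Y,
      ∀ a : PreT M X, n (Quot.mk (STRel M X) a) = Quot.mk (STRel M Y) (normPre M f a) := by
  let n : sT M X → sT M Y :=
    Quot.lift (fun a => Quot.mk (STRel M Y) (normPre M f a)) fun _ _ => normPre_sound M f
  exact ⟨fun _ _ h => congrArg n h, n, fun _ => rfl⟩

/-- The norm maps defined on `sT₀(M)` descend to the quotient `sT(M)`: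
for every `G`-map `f : X → Y`, if two pairs become equal in `sT(M)(X)` then their norms
become equal in `sT(M)(Y)`.  Consequently `sT(M)` carries induced norm maps. -/
theorem statement3 [Finite G] (M : SemiMackey G) {X Y : FinGSet G}
    (f : X.carrier →[G] Y.carrier) :
    (∀ a b : PreT M X, Quot.mk (STRel M X) a = Quot.mk (STRel M X) b →
      Quot.mk (STRel M Y) (normPre M f a) = Quot.mk (STRel M Y) (normPre M f b)) ∧
    ∃ n : sT M X → sT M Y,
      ∀ a : PreT M X, n (Quot.mk (STRel M X) a) = Quot.mk (STRel M Y) (normPre M f a) :=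
  statement3_general M f

end Tamb
end Tamb
end

section
/- Let G be a finite group and M a semi-Mackey functor over G. The functions θ_M(X) : M(X) → sT(M)(X), sending x to the class of (X →= X →= X, x), commute with all restrictions and transfers; that is, θ_M : M → sT(M) is a map of semi-Mackey functors. -/
set_option autoImplicit false

namespace Tamb

variable {G : Type} [Group G]

/-!
For transfers: the exponential diagram of `(f, id)` has top row `id_X`, so the distributive
relation identifies `(Y = Y = Y, t_f x)` with `(X = X →f Y, x)`. For restrictions: pulling the
identities back along `f` gives identities again, so the restricted pair is isomorphic to
`(Y = Y = Y, r_f x)`.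
-/

namespace Tamb

variable {G : Type} [Group G]

theorem IsEquivariant.trans {A B C : Type} [SMul G A] [SMul G B] [SMul G C] {e : A ≃ B}
    {e' : B ≃ C} (he : IsEquivariant G ⇑e) (he' : IsEquivariant G ⇑e') :
    IsEquivariant G ⇑(e.trans e') := fun a x => by
  simp only [Equiv.trans_apply, he a x, he' a (e x)]

section IdentityDiagrams

variable {X Y W : Type} [MulAction G X] [MulAction G Y] [MulAction G W]

def Pb.idLeftEquiv (g : W →[G] X) : W ≃ Pb (gid G X) g where
  toFun w := ⟨(g w, w), rfl⟩
  invFun p := p.1.2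
  left_inv _ := rfl
  right_inv p := Subtype.ext (Prod.ext p.2.symm rfl)

theorem Pb.isEquivariant_idLeftEquiv (g : W →[G] X) :
    IsEquivariant G ⇑(Pb.idLeftEquiv g) := fun a w =>
  Subtype.ext (Prod.ext (g.map_smul a w) rfl)

/-- Over the singleton fibers of the identity, a section of `f` is just a point of `X`. -/
def Sec.idRightEquiv (f : X →[G] Y) : X ≃ Sec f (gid G Y) where
  toFun x := ⟨f x, fun _ _ => x, fun _ h => h.symm⟩
  invFun σ := σ.sec σ.pt rfl
  left_inv _ := rfl
  right_inv σ := Sec.ext' (σ.isSec σ.pt rfl) fun _ _ h' => Sec.sec_congr σ h'.symm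

theorem Sec.isEquivariant_idRightEquiv (f : X →[G] Y) :
    IsEquivariant G ⇑(Sec.idRightEquiv f) := fun a x => by
  refine Sec.ext' (f.map_smul a x) fun y _ hy => ?_
  have hy' : (gid G Y) (a⁻¹ • y) = (Sec.idRightEquiv f x).pt := by
    show a⁻¹ • y = f x
    rw [show y = a • f x from hy, inv_smul_smul]
  rw [Sec.smul_sec a _ y hy hy']
  rfl

theorem isDistributor_gid (f : X →[G] Y) :
    IsDistributor f (gid G Y) (gid G X) (gid G X) f :=
  ⟨(Sec.idRightEquiv f).trans (Pb.idLeftEquiv (pHom f (gid G Y))), Sec.idRightEquiv f,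
    IsEquivariant.trans (Sec.isEquivariant_idRightEquiv f) (Pb.isEquivariant_idLeftEquiv _),
    Sec.isEquivariant_idRightEquiv f, fun _ => rfl, fun _ => rfl, fun _ => rfl⟩

end IdentityDiagrams

theorem mk_thetaPre_tr (M : SemiMackey G) {X Y : FinGSet G} (f : X.carrier →[G] Y.carrier)
    (x : M.obj X) :
    Quot.mk (STRel M Y) (thetaPre M Y (M.tr f x)) =
      Quot.mk (STRel M Y) (trPre M f (thetaPre M X x)) := by
  have h := Quot.sound (STRel.distrib f (gid G Y.carrier) (gid G Y.carrier)
    (gid G X.carrier) (gid G X.carrier) f (isDistributor_gid f) x)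
  rw [M.res_id] at h
  -- `gcomp (gid G Y.carrier) f` and `gcomp f (gid G X.carrier)` agree definitionally
  exact h

theorem mk_thetaPre_res (M : SemiMackey G) {X Y : FinGSet G} (f : Y.carrier →[G] X.carrier)
    (x : M.obj X) :
    Quot.mk (STRel M Y) (thetaPre M Y (M.res f x)) =
      Quot.mk (STRel M Y) (resPre M f (thetaPre M X x)) := by
  have hV := Pb.isEquivariant_idLeftEquiv f
  have hU :=
    IsEquivariant.trans hV (Pb.isEquivariant_idLeftEquiv (Pb.fstHom (gid G X.carrier) f))
  refine (Quot.sound (STRel.iso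
    ⟨_, Pb.idLeftEquiv f, hU, hV, fun _ => rfl, fun _ => rfl, ?_⟩)).symm
  -- the projection of the double pullback onto `X`, precomposed with the iso, is `f` on the nose
  exact M.res_comp _ _ x

theorem statement4_general (M : SemiMackey G) :
    (∀ {X Y : FinGSet G} (f : X.carrier →[G] Y.carrier) (x : M.obj X),
      Quot.mk (STRel M Y) (thetaPre M Y (M.tr f x)) =
        Quot.mk (STRel M Y) (trPre M f (thetaPre M X x))) ∧
    (∀ {X Y : FinGSet G} (f : Y.carrier →[G] X.carrier) (x : M.obj X),
      Quot.mk (STRel M Y) (thetaPre M Y (M.res f x)) =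
        Quot.mk (STRel M Y) (resPre M f (thetaPre M X x))) :=
  ⟨mk_thetaPre_tr M, mk_thetaPre_res M⟩

/-- The functions `θ_M(X) : M(X) → sT(M)(X)`, `x ↦ [(X = X = X, x)]`,
commute with all transfers and restrictions; that is, `θ_M : M → sT(M)` is a map of
semi-Mackey functors. -/
theorem statement4 [Finite G] (M : SemiMackey G) :
    (∀ {X Y : FinGSet G} (f : X.carrier →[G] Y.carrier) (x : M.obj X),
      Quot.mk (STRel M Y) (thetaPre M Y (M.tr f x)) =
        Quot.mk (STRel M Y) (trPre M f (thetaPre M X x))) ∧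
    (∀ {X Y : FinGSet G} (f : Y.carrier →[G] X.carrier) (x : M.obj X),
      Quot.mk (STRel M Y) (thetaPre M Y (M.res f x)) =
        Quot.mk (STRel M Y) (resPre M f (thetaPre M X x))) :=
  statement4_general M

end Tamb
end Tamb
end

section
/- Let G be a finite group and M a semi-Mackey functor over G. The unique map of semi-Tambara functors sA → sT(M) (where sA is the Burnside semi-Mackey functor, the initial semi-Tambara functor) induces an isomorphism of semi-Mackey functors sA ≅ sT^0(M), and the universal map θ_M : M → sT(M) induces an isomorphism of semi-Mackey functors M ≅ sT^1(M). -/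
set_option autoImplicit false

namespace Tamb

variable {G : Type} [Group G]

namespace Tamb

variable {G : Type} [Group G]

/-!
A class in `sT(M)(Y)` is represented by a pair `(U →i V →j Y, u)`. Two invariants of such a pair
survive both generating relations: the `G`-set `V₀ → Y` of points of `V` with empty `i`-fiber, an
element of `sA(Y)`, and `t_{j|V₁} r_s u ∈ M(Y)`, where `V₁ ⊆ V` is the locus over which `i` has
exactly one preimage and `s : V₁ → U` is the resulting section. An isomorphism of pairs is the
distributive relation for `k = id`, so only exponential diagrams need checking: there `h : B → V`
identifies `B₀` with `V₀`, and `B₁` with `V₁ ×_U W`, which by the Mackey formula is exactly what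
the second invariant needs. On pairs of pure degree `0` and `1` the invariants invert
`[A → Y] ↦ (∅ → A → Y, 0)` and `θ_M`. Conversely a degree-`0` pair has `U = ∅`, and a
degree-`1` pair has `i` bijective and is related to `θ_M (t_j r_{i⁻¹} u)`.
-/

set_option linter.dupNamespace false

section Equivariant

variable {A B : Type} [MulAction G A] [MulAction G B]

theorem isEquivariant_symm (e : A ≃ B) (he : IsEquivariant G e) : IsEquivariant G e.symm := by
  intro γ b
  apply e.injective
  rw [Equiv.apply_symm_apply, he, Equiv.apply_symm_apply]

noncomputable def invHom (e : A →[G] B) (he : Function.Bijective e) : B →[G] A :=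
  e.inverse (Equiv.ofBijective e he).symm (Equiv.ofBijective e he).symm_apply_apply
    (Equiv.ofBijective e he).apply_symm_apply

@[simp] theorem apply_invHom (e : A →[G] B) (he : Function.Bijective e) (b : B) :
    e (invHom e he b) = b :=
  (Equiv.ofBijective e he).apply_symm_apply b

end Equivariant

section Mackey

variable (M : SemiMackey G)

theorem eq_of_isEmpty {X : FinGSet G} [IsEmpty X.carrier] (x y : M.obj X) : x = y := by
  have : Subsingleton (M.obj (emptyG G)) := M.empty_subsingleton
  let toEmpty : X.carrier →[G] (emptyG G).carrier := ⟨isEmptyElim, fun _ => isEmptyElim⟩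
  have hid : gcomp (initHom X) toEmpty = gid G X.carrier := MulActionHom.ext isEmptyElim
  calc x = M.res toEmpty (M.res (initHom X) x) := by rw [M.res_comp, hid, M.res_id]
    _ = M.res toEmpty (M.res (initHom X) y) := congrArg _ (Subsingleton.elim _ _)
    _ = y := by rw [M.res_comp, hid, M.res_id]

def pullbackSub {X Y Z : Type} [MulAction G X] [MulAction G Y] [MulAction G Z]
    (f : X →[G] Z) (g : Y →[G] Z) : SubMulAction G (X × Y) where
  carrier := {p | f p.1 = g p.2}
  smul_mem' γ p (hp : f p.1 = g p.2) := show f (γ • p.1) = g (γ • p.2) by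
    rw [map_smul, map_smul, hp]

theorem tr_res_pullback_congr {X Y Z Z' : FinGSet G} (f : X.carrier →[G] Z.carrier)
    (g : Y.carrier →[G] Z.carrier) (f' : X.carrier →[G] Z'.carrier)
    (g' : Y.carrier →[G] Z'.carrier) (hfg : ∀ x y, f x = g y ↔ f' x = g' y) (y : M.obj Y) :
    M.tr (X := mkG G (Pb f g)) (Pb.fstHom f g) (M.res (X := mkG G (Pb f g)) (Pb.sndHom f g) y) =
      M.tr (X := mkG G (Pb f' g')) (Pb.fstHom f' g')
        (M.res (X := mkG G (Pb f' g')) (Pb.sndHom f' g') y) := by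
  -- `Pb f g` is definitionally the `G`-subset `pullbackSub f g` of `X × Y`.
  have key : ∀ S T : SubMulAction G (X.carrier × Y.carrier), S = T →
      M.tr (X := mkG G S) ⟨fun p => p.1.1, fun _ _ => rfl⟩
          (M.res (X := mkG G S) ⟨fun p => p.1.2, fun _ _ => rfl⟩ y) =
        M.tr (X := mkG G T) ⟨fun p => p.1.1, fun _ _ => rfl⟩
          (M.res (X := mkG G T) ⟨fun p => p.1.2, fun _ _ => rfl⟩ y) := by
    rintro S _ rfl
    rfl
  exact key (pullbackSub f g) (pullbackSub f' g') (SubMulAction.ext fun p => hfg p.1 p.2)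

theorem res_tr_of_injective {C D : FinGSet G} (e : C.carrier →[G] D.carrier)
    (he : Function.Injective e) (y : M.obj C) : M.res e (M.tr e y) = y := by
  rw [M.mackey, tr_res_pullback_congr M e e (gid G C.carrier) (gid G C.carrier)
    (fun _ _ => he.eq_iff), ← M.mackey, M.res_id, M.tr_id]

theorem res_injective_of_bijective {C D : FinGSet G} (e : C.carrier →[G] D.carrier)
    (he : Function.Bijective e) : Function.Injective (M.res e) := by
  have hinv : gcomp e (invHom e he) = gid G D.carrier := MulActionHom.ext (apply_invHom e he)
  refine Function.LeftInverse.injective (g := M.res (invHom e he)) fun x => ?_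
  rw [M.res_comp, hinv, M.res_id]

theorem tr_res_of_bijective {C D : FinGSet G} (e : C.carrier →[G] D.carrier)
    (he : Function.Bijective e) (x : M.obj D) : M.tr e (M.res e x) = x :=
  res_injective_of_bijective M e he (res_tr_of_injective M e he.1 _)

theorem tr_comp_res_comp_of_bijective {A' A X Y : FinGSet G} (φ : A'.carrier →[G] A.carrier)
    (hφ : Function.Bijective φ) (p : A.carrier →[G] Y.carrier) (q : A.carrier →[G] X.carrier)
    (x : M.obj X) : M.tr (gcomp p φ) (M.res (gcomp q φ) x) = M.tr p (M.res q x) := by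
  rw [← M.tr_comp, ← M.res_comp, tr_res_of_bijective M φ hφ]

end Mackey

section Distributor

variable {W U V A B : Type} [MulAction G W] [MulAction G U] [MulAction G V] [MulAction G A]
  [MulAction G B]

theorem Sec.sec_congr' {i : W →[G] U} {j : U →[G] V} {σ τ : Sec i j} (hστ : σ = τ)
    {y y' : U} (e : y = y') {h : j y = σ.pt} {h' : j y' = τ.pt} : σ.sec y h = τ.sec y' h' := by
  subst hστ
  exact Sec.sec_congr σ e

theorem apply_eval (k : W →[G] U) (i : U →[G] V) (q : ECan k i) : k (eval k i q) = q.1.1 :=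
  q.1.2.isSec q.1.1 q.2

theorem _root_.Tamb.IsDistributor.comp_equiv {k : W →[G] U} {i : U →[G] V} {f : A →[G] W}
    {g : A →[G] B} {h : B →[G] V} (hD : IsDistributor k i f g h) {A' B' : Type} [MulAction G A']
    [MulAction G B'] {g' : A' →[G] B'} (φ : A' ≃ A) (ψ : B' ≃ B) (hφ : IsEquivariant G φ)
    (hψ : IsEquivariant G ψ) (hg : ∀ a, g (φ a) = ψ (g' a)) :
    IsDistributor k i (gcomp f ⟨φ, hφ⟩) g' (gcomp h ⟨ψ, hψ⟩) := by
  obtain ⟨α, β, hα, hβ, hαf, hβg, hβh⟩ := hD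
  refine ⟨φ.trans α, ψ.trans β, fun γ a => ?_, fun γ b => ?_, fun a => hαf (φ a),
    fun a => ?_, fun b => hβh (ψ b)⟩
  · simp only [Equiv.trans_apply, hφ γ a, hα γ]
  · simp only [Equiv.trans_apply, hψ γ b, hβ γ]
  · simp only [Equiv.trans_apply, ← hg, hβg]

def Sec.ofIdLeft (i : U →[G] V) (v : V) : Sec (gid G U) i :=
  ⟨v, fun u _ => u, fun _ _ => rfl⟩

theorem Sec.eq_ofIdLeft {i : U →[G] V} (σ : Sec (gid G U) i) : σ = Sec.ofIdLeft i σ.pt :=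
  Sec.ext' rfl fun y h _ => σ.isSec y h

theorem Sec.ofIdLeft_smul (i : U →[G] V) (γ : G) (v : V) :
    Sec.ofIdLeft i (γ • v) = γ • Sec.ofIdLeft i v :=
  Sec.ext' rfl fun y _ _ => (smul_inv_smul γ y).symm

theorem isDistributor_id_left (i : U →[G] V) :
    IsDistributor (gid G U) i (gid G U) i (gid G V) := by
  let α : U ≃ ECan (gid G U) i :=
    { toFun := fun u => ⟨(u, Sec.ofIdLeft i (i u)), rfl⟩
      invFun := fun q => q.1.1
      left_inv := fun _ => rfl
      right_inv := fun q => Subtype.ext (Prod.ext rfl (by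
        rw [Sec.eq_ofIdLeft q.1.2, ← show i q.1.1 = q.1.2.pt from q.2])) }
  let β : V ≃ Sec (gid G U) i :=
    { toFun := Sec.ofIdLeft i
      invFun := fun σ => σ.pt
      left_inv := fun _ => rfl
      right_inv := fun σ => (Sec.eq_ofIdLeft σ).symm }
  refine ⟨α, β, fun γ u => Subtype.ext (Prod.ext rfl ?_), Sec.ofIdLeft_smul i,
    fun _ => rfl, fun _ => rfl, fun _ => rfl⟩
  show Sec.ofIdLeft i (i (γ • u)) = γ • Sec.ofIdLeft i (i u)
  rw [map_smul, Sec.ofIdLeft_smul]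

def Sec.ofIdRight (j : U →[G] V) (u : U) : Sec j (gid G V) :=
  ⟨j u, fun _ _ => u, fun _ h => h.symm⟩

theorem Sec.eq_ofIdRight {j : U →[G] V} (σ : Sec j (gid G V)) :
    σ = Sec.ofIdRight j (σ.sec σ.pt rfl) :=
  Sec.ext' (σ.isSec σ.pt rfl).symm fun _ h _ => Sec.sec_congr σ h

theorem Sec.ofIdRight_smul (j : U →[G] V) (γ : G) (u : U) :
    Sec.ofIdRight j (γ • u) = γ • Sec.ofIdRight j u :=
  Sec.ext' (map_smul j γ u) fun _ _ _ => rfl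

theorem isDistributor_id_right (j : U →[G] V) :
    IsDistributor j (gid G V) (gid G U) (gid G U) j := by
  let α : U ≃ ECan j (gid G V) :=
    { toFun := fun u => ⟨(j u, Sec.ofIdRight j u), rfl⟩
      invFun := fun q => q.1.2.sec q.1.1 q.2
      left_inv := fun _ => rfl
      right_inv := fun q => Subtype.ext (Prod.ext (q.1.2.isSec q.1.1 q.2) (by
        rw [Sec.eq_ofIdRight q.1.2]
        exact congrArg (Sec.ofIdRight j) (Sec.sec_congr _ q.2))) }
  let β : U ≃ Sec j (gid G V) :=
    { toFun := Sec.ofIdRight j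
      invFun := fun σ => σ.sec σ.pt rfl
      left_inv := fun _ => rfl
      right_inv := fun σ => (Sec.eq_ofIdRight σ).symm }
  exact ⟨α, β, fun γ u => Subtype.ext (Prod.ext (map_smul j γ u) (Sec.ofIdRight_smul j γ u)),
    Sec.ofIdRight_smul j, fun _ => rfl, fun _ => rfl, fun _ => rfl⟩

end Distributor

abbrev fib {U V : Type} [MulAction G U] [MulAction G V] (i : U →[G] V) (v : V) : Type :=
  {u // i u = v}

section DistributorFibers

variable {W U V A B : Type} [MulAction G W] [MulAction G U] [MulAction G V] [MulAction G A]
  [MulAction G B] {k : W →[G] U} {i : U →[G] V} {f : A →[G] W} {g : A →[G] B}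
  {h : B →[G] V}

theorem _root_.Tamb.IsDistributor.comm (hD : IsDistributor k i f g h) (a : A) :
    i (k (f a)) = h (g a) := by
  obtain ⟨α, β, -, -, hαf, hβg, hβh⟩ := hD
  rw [← hαf, apply_eval, ← hβh, hβg]
  exact (α a).2

theorem _root_.Tamb.IsDistributor.exists_lift (hD : IsDistributor k i f g h) {b : B} {u : U}
    (hu : i u = h b) : ∃ a, g a = b ∧ k (f a) = u := by
  obtain ⟨α, β, -, -, hαf, hβg, hβh⟩ := hD
  have hu' : i u = (β b).pt := by rw [hβh, hu]
  have hα : α (α.symm ⟨(u, β b), hu'⟩) = ⟨(u, β b), hu'⟩ := α.apply_symm_apply _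
  exact ⟨α.symm ⟨(u, β b), hu'⟩, β.injective (by rw [hβg, hα]),
    by rw [← hαf, apply_eval, hα]⟩

theorem _root_.Tamb.IsDistributor.card_fib (hD : IsDistributor k i f g h) (b : B) :
    Nat.card (fib g b) = Nat.card (fib i (h b)) := by
  refine Nat.card_eq_of_bijective (fun a => ⟨k (f a.1), by rw [hD.comm, a.2]⟩)
    ⟨?_, fun u => ?_⟩
  · obtain ⟨α, β, -, -, hαf, hβg, -⟩ := hD
    rintro ⟨a, rfl⟩ ⟨a', ha'⟩ haa'
    have hk : k (f a) = k (f a') := congrArg Subtype.val haa'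
    rw [← hαf, ← hαf, apply_eval, apply_eval] at hk
    exact Subtype.ext (α.injective (Subtype.ext (Prod.ext hk (by rw [← hβg, ← hβg, ha']))))
  · obtain ⟨a, ha, hau⟩ := hD.exists_lift u.2
    exact ⟨⟨a, ha⟩, Subtype.ext hau⟩

theorem _root_.Tamb.IsDistributor.eq_of_forall_eq (hD : IsDistributor k i f g h) {b b' : B}
    (hh : h b = h b') (hf : ∀ a a', g a = b → g a' = b' → k (f a) = k (f a') → f a = f a') :
    b = b' := by
  obtain ⟨α, β, -, -, hαf, hβg, hβh⟩ := id hD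
  have sec_eq : ∀ a u (hu : i u = (β (g a)).pt), k (f a) = u → (β (g a)).sec u hu = f a := by
    intro a u hu hau
    exact (Sec.sec_congr' (hβg a) (by rw [← hau, ← hαf, apply_eval])).trans (hαf a)
  apply β.injective
  refine Sec.ext' (by rw [hβh, hβh, hh]) fun u hu hu' => ?_
  obtain ⟨a, rfl, rfl⟩ := hD.exists_lift (hu.trans (hβh b))
  obtain ⟨a', rfl, ha'⟩ := hD.exists_lift (hu'.trans (hβh _))
  rw [sec_eq a _ hu rfl, sec_eq a' _ hu' ha']
  exact hf a a' rfl rfl ha'.symm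

theorem _root_.Tamb.IsDistributor.exists_of_sec (hD : IsDistributor k i f g h) (σ : Sec k i) :
    ∃ b, h b = σ.pt ∧ ∀ a, g a = b → ∃ hu, σ.sec (k (f a)) hu = f a := by
  obtain ⟨α, β, -, -, hαf, hβg, hβh⟩ := hD
  refine ⟨β.symm σ, by rw [← hβh, Equiv.apply_symm_apply], fun a ha => ?_⟩
  have hσ : (α a).1.2 = σ := by rw [← hβg, ha, Equiv.apply_symm_apply]
  have hk : k (f a) = (α a).1.1 := by rw [← hαf, apply_eval]
  refine ⟨by rw [hk, ← hσ]; exact (α a).2, ?_⟩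
  exact (Sec.sec_congr' hσ.symm hk).trans (hαf a)

end DistributorFibers

section Degree

variable {U V : Type} [MulAction G U] [MulAction G V]

theorem card_fib_smul (i : U →[G] V) (γ : G) (v : V) :
    Nat.card (fib i (γ • v)) = Nat.card (fib i v) :=
  (Nat.card_congr
    { toFun := fun q => ⟨γ • q.1, by rw [map_smul, q.2]⟩
      invFun := fun q => ⟨γ⁻¹ • q.1, by rw [map_smul, q.2, inv_smul_smul]⟩
      left_inv := fun q => Subtype.ext (inv_smul_smul γ q.1)
      right_inv := fun q => Subtype.ext (smul_inv_smul γ q.1) }).symm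

def degreeSub (i : U →[G] V) (n : ℕ) : SubMulAction G V where
  carrier := {v | Nat.card (fib i v) = n}
  smul_mem' γ v hv := (card_fib_smul i γ v).trans hv

theorem mem_degreeSub_one_iff {i : U →[G] V} {v : V} : v ∈ degreeSub i 1 ↔ ∃! u, i u = v :=
  Nat.card_eq_one_iff_unique.trans
    ((unique_iff_subsingleton_and_nonempty _).symm.trans (unique_subtype_iff_existsUnique _))

end Degree

section DegreePart

variable {U : Type} [MulAction G U] {V : FinGSet G}

def degPart (i : U →[G] V.carrier) (n : ℕ) : FinGSet G := mkG G (degreeSub i n)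

def degIncl (i : U →[G] V.carrier) (n : ℕ) : (degPart i n).carrier →[G] V.carrier :=
  (degreeSub i n).subtype

noncomputable def degOneSection (i : U →[G] V.carrier) : (degPart i 1).carrier →[G] U where
  toFun v := (mem_degreeSub_one_iff.mp v.2).exists.choose
  map_smul' γ v := (mem_degreeSub_one_iff.mp (γ • v).2).unique
    (mem_degreeSub_one_iff.mp (γ • v).2).exists.choose_spec
    (by rw [map_smul, (mem_degreeSub_one_iff.mp v.2).exists.choose_spec]; rfl)

theorem apply_degOneSection (i : U →[G] V.carrier) (v : (degPart i 1).carrier) :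
    i (degOneSection i v) = v.1 :=
  (mem_degreeSub_one_iff.mp v.2).exists.choose_spec

theorem eq_degOneSection {i : U →[G] V.carrier} {v : (degPart i 1).carrier} {u : U}
    (hu : i u = v.1) : u = degOneSection i v :=
  (mem_degreeSub_one_iff.mp v.2).unique hu (apply_degOneSection i v)

end DegreePart

section Components

variable (M : SemiMackey G) {Y : FinGSet G}

theorem STRel.eq_of_distrib {α : Sort*} (F : PreT M Y → α)
    (hF : ∀ {W U V A B : FinGSet G} (k : W.carrier →[G] U.carrier)
      (i : U.carrier →[G] V.carrier) (j : V.carrier →[G] Y.carrier)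
      (f : A.carrier →[G] W.carrier) (g : A.carrier →[G] B.carrier)
      (h : B.carrier →[G] V.carrier), IsDistributor k i f g h → ∀ w : M.obj W,
      F ⟨U, V, i, j, M.tr k w⟩ = F ⟨A, B, g, gcomp j h, M.res f w⟩)
    {a b : PreT M Y} (hab : STRel M Y a b) : F a = F b := by
  cases hab with
  | distrib k i j f g h hD w => exact hF k i j f g h hD w
  | iso hiso =>
    obtain ⟨U, V, i, j, u⟩ := a
    obtain ⟨U', V', i', j', u'⟩ := b
    obtain ⟨φ, ψ, hφ, hψ, hi, hj, hu⟩ := hiso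
    dsimp only at hu
    rw [← hu]
    have hF' := hF _ i j _ i' _ ((isDistributor_id_left i).comp_equiv φ ψ hφ hψ hi) u
    rwa [M.tr_id, show gcomp j (gcomp (gid G V.carrier) ⟨ψ, hψ⟩) = j' from
      MulActionHom.ext hj] at hF'

def degZeroComponent (a : PreT M Y) : Quot (@BurnIso G _ Y) :=
  Quot.mk _ ⟨degPart a.i 0, gcomp a.j (degIncl a.i 0)⟩

noncomputable def degOneComponent (a : PreT M Y) : M.obj Y :=
  M.tr (gcomp a.j (degIncl a.i 1)) (M.res (degOneSection a.i) a.u)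

end Components

section DistributorDegrees

variable {W U V A B : FinGSet G} {k : W.carrier →[G] U.carrier} {i : U.carrier →[G] V.carrier}
  {f : A.carrier →[G] W.carrier} {g : A.carrier →[G] B.carrier} {h : B.carrier →[G] V.carrier}

def degZeroMap (hD : IsDistributor k i f g h) :
    (degPart g 0).carrier →[G] (degPart i 0).carrier :=
  ⟨fun b => ⟨h b.1, (hD.card_fib b.1).symm.trans b.2⟩,
    fun γ b => Subtype.ext (map_smul h γ b.1)⟩

/-- Over a point with empty `i`-fiber there is exactly one section, so `h` is bijective there. -/
theorem degZeroMap_bijective (hD : IsDistributor k i f g h) :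
    Function.Bijective (degZeroMap hD) := by
  refine ⟨fun b b' hbb' => Subtype.ext (hD.eq_of_forall_eq (congrArg Subtype.val hbb') ?_),
    fun v => ?_⟩
  · have : IsEmpty (fib g b.1) := Finite.card_eq_zero_iff.mp b.2
    exact fun a _ ha _ _ => isEmptyElim (⟨a, ha⟩ : fib g b.1)
  · have : IsEmpty (fib i v.1) := Finite.card_eq_zero_iff.mp v.2
    obtain ⟨b, hb, -⟩ := hD.exists_of_sec
      ⟨v.1, fun u hu => isEmptyElim (⟨u, hu⟩ : fib i v.1),
        fun u hu => isEmptyElim (⟨u, hu⟩ : fib i v.1)⟩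
    exact ⟨⟨b, (hD.card_fib b).trans (by rw [hb]; exact v.2)⟩, Subtype.ext hb⟩

noncomputable def degOneToPullback (hD : IsDistributor k i f g h) :
    (degPart g 1).carrier →[G] (mkG G (Pb (degOneSection i) k)).carrier where
  toFun b := ⟨(⟨h b.1, (hD.card_fib b.1).symm.trans b.2⟩, f (degOneSection g b)),
    (eq_degOneSection (by rw [hD.comm, apply_degOneSection])).symm⟩
  map_smul' γ b := Subtype.ext (Prod.ext (Subtype.ext (map_smul h γ b.1))
    (by simp only [map_smul]; rfl))

/-- Over a point with a single `i`-preimage `u`, a section is the choice of a point of `W`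
over `u`. -/
theorem degOneToPullback_bijective (hD : IsDistributor k i f g h) :
    Function.Bijective (degOneToPullback hD) := by
  refine ⟨fun b b' hbb' => Subtype.ext (hD.eq_of_forall_eq ?_ fun a a' ha ha' _ => ?_),
    fun ⟨⟨v, w⟩, hvw⟩ => ?_⟩
  · exact congrArg (fun p => p.1.1.1) hbb'
  · rw [eq_degOneSection (v := b) ha, eq_degOneSection (v := b') ha']
    exact congrArg (fun p => p.1.2) hbb'
  · obtain ⟨b, hb, hbw⟩ := hD.exists_of_sec
      ⟨v.1, fun _ _ => w, fun _ hu => ((eq_degOneSection hu).trans hvw).symm⟩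
    have hb1 : b ∈ degreeSub g 1 := (hD.card_fib b).trans (by rw [hb]; exact v.2)
    obtain ⟨_, hw⟩ := hbw _ (apply_degOneSection g ⟨b, hb1⟩)
    exact ⟨⟨b, hb1⟩, Subtype.ext (Prod.ext (Subtype.ext hb) hw.symm)⟩

end DistributorDegrees

section Invariance

variable (M : SemiMackey G) {Y : FinGSet G}

theorem mk_burnPre_eq_of_bijective {s t : BurnPre G Y} (φ : s.A.carrier →[G] t.A.carrier)
    (hφ : Function.Bijective φ) (hf : ∀ x, t.f (φ x) = s.f x) :
    Quot.mk (@BurnIso G _ Y) s = Quot.mk _ t :=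
  Quot.sound ⟨Equiv.ofBijective φ hφ, map_smul φ, hf⟩

theorem degZeroComponent_distrib {W U V A B : FinGSet G} (k : W.carrier →[G] U.carrier)
    (i : U.carrier →[G] V.carrier) (j : V.carrier →[G] Y.carrier)
    (f : A.carrier →[G] W.carrier) (g : A.carrier →[G] B.carrier)
    (h : B.carrier →[G] V.carrier) (hD : IsDistributor k i f g h) (w : M.obj W) :
    degZeroComponent M ⟨U, V, i, j, M.tr k w⟩ =
      degZeroComponent M ⟨A, B, g, gcomp j h, M.res f w⟩ :=
  (mk_burnPre_eq_of_bijective (degZeroMap hD) (degZeroMap_bijective hD) fun _ => rfl).symm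

theorem degOneComponent_distrib {W U V A B : FinGSet G} (k : W.carrier →[G] U.carrier)
    (i : U.carrier →[G] V.carrier) (j : V.carrier →[G] Y.carrier)
    (f : A.carrier →[G] W.carrier) (g : A.carrier →[G] B.carrier)
    (h : B.carrier →[G] V.carrier) (hD : IsDistributor k i f g h) (w : M.obj W) :
    degOneComponent M ⟨U, V, i, j, M.tr k w⟩ =
      degOneComponent M ⟨A, B, g, gcomp j h, M.res f w⟩ := by
  change M.tr (gcomp j (degIncl i 1)) (M.res (degOneSection i) (M.tr k w)) =
    M.tr (gcomp (gcomp j h) (degIncl g 1)) (M.res (degOneSection g) (M.res f w))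
  rw [M.mackey, M.res_comp]
  exact (M.tr_comp _ _ _).trans
    (tr_comp_res_comp_of_bijective M _ (degOneToPullback_bijective hD) _ _ w).symm

theorem degZeroComponent_sound {a b : PreT M Y} (hab : STRel M Y a b) :
    degZeroComponent M a = degZeroComponent M b :=
  STRel.eq_of_distrib M _ (degZeroComponent_distrib M) hab

theorem degOneComponent_sound {a b : PreT M Y} (hab : STRel M Y a b) :
    degOneComponent M a = degOneComponent M b :=
  STRel.eq_of_distrib M _ (degOneComponent_distrib M) hab

end Invariance

section PureDegree

variable (M : SemiMackey G) {Y : FinGSet G}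

theorem degN_one_iff_bijective (a : PreT M Y) : DegN 1 a ↔ Function.Bijective a.i :=
  (forall_congr' fun _ => mem_degreeSub_one_iff).trans (Function.bijective_iff_existsUnique _).symm

theorem thetaPre_degN_one (x : M.obj Y) : DegN 1 (thetaPre M Y x) :=
  (degN_one_iff_bijective M _).mpr Function.bijective_id

theorem bPair_degN_zero (s : BurnPre G Y) : DegN 0 (bPair M s) :=
  fun _ => @Nat.card_of_isEmpty _ ⟨fun q => q.1.elim⟩

theorem degOneComponent_of_bijective (a : PreT M Y) (hi : Function.Bijective a.i) :
    degOneComponent M a = M.tr a.j (M.res (invHom a.i hi) a.u) := by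
  have hincl : Function.Bijective (degIncl a.i 1) :=
    ⟨Subtype.val_injective, fun v => ⟨⟨v, (degN_one_iff_bijective M a).mpr hi v⟩, rfl⟩⟩
  have hsec : degOneSection a.i = gcomp (invHom a.i hi) (degIncl a.i 1) :=
    MulActionHom.ext fun v => (eq_degOneSection (apply_invHom a.i hi v.1)).symm
  rw [degOneComponent, hsec]
  exact tr_comp_res_comp_of_bijective M _ hincl _ _ _

theorem degOneComponent_thetaPre (x : M.obj Y) : degOneComponent M (thetaPre M Y x) = x := by
  have hid : Function.Bijective (gid G Y.carrier) := Function.bijective_id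
  have hinv : invHom (gid G Y.carrier) hid = gid G Y.carrier :=
    MulActionHom.ext (apply_invHom _ hid)
  rw [degOneComponent_of_bijective M _ hid]
  change M.tr (gid G Y.carrier) (M.res (invHom (gid G Y.carrier) hid) x) = x
  rw [hinv, M.res_id, M.tr_id]

theorem mk_thetaPre_tr_s6 {V : FinGSet G} (j : V.carrier →[G] Y.carrier) (y : M.obj V) :
    Quot.mk (STRel M Y) (thetaPre M Y (M.tr j y)) =
      Quot.mk _ ⟨V, V, gid G V.carrier, j, y⟩ := by
  have h := Quot.sound (STRel.distrib j (gid G Y.carrier) (gid G Y.carrier) (gid G V.carrier)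
    (gid G V.carrier) j (isDistributor_id_right j) y)
  rwa [M.res_id] at h

theorem mk_eq_thetaPre_of_degN_one {a : PreT M Y} (ha : DegN 1 a) :
    Quot.mk (STRel M Y) a = Quot.mk _ (thetaPre M Y (degOneComponent M a)) := by
  have hi := (degN_one_iff_bijective M a).mp ha
  rw [degOneComponent_of_bijective M a hi, mk_thetaPre_tr_s6]
  exact Quot.sound (STRel.iso ⟨(Equiv.ofBijective a.i hi).symm, Equiv.refl _,
    isEquivariant_symm _ (map_smul a.i), fun _ _ => rfl,
    (Equiv.ofBijective a.i hi).apply_symm_apply, fun _ => rfl, rfl⟩)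

theorem isEmpty_of_degN_zero {a : PreT M Y} (ha : DegN 0 a) : IsEmpty a.U.carrier :=
  ⟨fun u => (Finite.card_eq_zero_iff.mp (ha (a.i u))).false ⟨u, rfl⟩⟩

theorem mk_eq_bPair_of_degN_zero {a : PreT M Y} (ha : DegN 0 a) :
    Quot.mk (STRel M Y) a = Quot.mk _ (bPair M ⟨a.V, a.j⟩) :=
  have := isEmpty_of_degN_zero M ha
  Quot.sound (STRel.iso ⟨(Equiv.equivEmpty _).symm, Equiv.refl _, fun _ e => e.elim,
    fun _ _ => rfl, fun e => e.elim, fun _ => rfl, @Subsingleton.elim _ M.empty_subsingleton _ _⟩)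

theorem degZeroComponent_bPair (s : BurnPre G Y) :
    degZeroComponent M (bPair M s) = Quot.mk _ s :=
  mk_burnPre_eq_of_bijective (degIncl _ 0)
    ⟨Subtype.val_injective, fun v => ⟨⟨v, bPair_degN_zero M s v⟩, rfl⟩⟩ fun _ => rfl

theorem mk_bPair_eq_of_burnIso {s t : BurnPre G Y} (hst : BurnIso s t) :
    Quot.mk (STRel M Y) (bPair M s) = Quot.mk _ (bPair M t) := by
  obtain ⟨e, he, hf⟩ := hst
  exact Quot.sound (STRel.iso ⟨Equiv.refl _, e.symm, fun _ _ => rfl, isEquivariant_symm e he,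
    fun e => e.elim, fun v => (hf (e.symm v)).symm.trans (congrArg t.f (e.apply_symm_apply v)),
    @Subsingleton.elim _ M.empty_subsingleton _ _⟩)

theorem mk_bPair_pullback {Z : FinGSet G} (f : Z.carrier →[G] Y.carrier) (s : BurnPre G Y) :
    Quot.mk (STRel M Z) (bPair M ⟨mkG G (Pb s.f f), Pb.sndHom s.f f⟩) =
      Quot.mk _ (resPre M f (bPair M s)) := by
  have : IsEmpty (resPre M f (bPair M s)).U.carrier := ⟨fun q => q.1.1.elim⟩
  exact Quot.sound (STRel.iso ⟨Equiv.equivEmpty _, Equiv.refl _, fun _ q => isEmptyElim q,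
    fun _ _ => rfl, isEmptyElim, fun _ => rfl, eq_of_isEmpty M _ _⟩)

end PureDegree

theorem statement6_general (M : SemiMackey G) :
    -- `sA ≅ sT⁰(M)`
    (∀ (Y : FinGSet G) (s t : BurnPre G Y), BurnIso s t →
      Quot.mk (STRel M Y) (bPair M s) = Quot.mk (STRel M Y) (bPair M t)) ∧
    (∀ Y : FinGSet G, ∃ e0 : Quot (@BurnIso G _ Y) → sT M Y,
      (∀ s : BurnPre G Y, e0 (Quot.mk _ s) = Quot.mk (STRel M Y) (bPair M s)) ∧
      Function.Injective e0 ∧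
      Set.range e0 = {cl : sT M Y | ∃ a : PreT M Y, Quot.mk (STRel M Y) a = cl ∧ DegN 0 a}) ∧
    -- this identification commutes with transfers and restrictions
    (∀ {Y Z : FinGSet G} (f : Y.carrier →[G] Z.carrier) (s : BurnPre G Y),
      Quot.mk (STRel M Z) (bPair M ⟨s.A, gcomp f s.f⟩) =
        Quot.mk (STRel M Z) (trPre M f (bPair M s))) ∧
    (∀ {Y Z : FinGSet G} (f : Z.carrier →[G] Y.carrier) (s : BurnPre G Y),
      Quot.mk (STRel M Z) (bPair M ⟨mkG G (Pb s.f f), Pb.sndHom s.f f⟩) =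
        Quot.mk (STRel M Z) (resPre M f (bPair M s))) ∧
    -- `M ≅ sT¹(M)` via `θ_M`
    (∀ Y : FinGSet G,
      Function.Injective (fun x : M.obj Y => Quot.mk (STRel M Y) (thetaPre M Y x)) ∧
      Set.range (fun x : M.obj Y => Quot.mk (STRel M Y) (thetaPre M Y x)) =
        {cl : sT M Y | ∃ a : PreT M Y, Quot.mk (STRel M Y) a = cl ∧ DegN 1 a}) := by
  refine ⟨fun _ _ _ => mk_bPair_eq_of_burnIso M, fun Y => ?_, fun _ _ => rfl,
    mk_bPair_pullback M, fun Y => ⟨?_, ?_⟩⟩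
  · refine ⟨Quot.lift _ fun _ _ => mk_bPair_eq_of_burnIso M, fun _ => rfl, ?_, ?_⟩
    · refine Function.LeftInverse.injective
        (g := Quot.lift (degZeroComponent M) fun _ _ => degZeroComponent_sound M) ?_
      rintro ⟨s⟩
      exact degZeroComponent_bPair M s
    · ext cl
      constructor
      · rintro ⟨⟨s⟩, rfl⟩
        exact ⟨bPair M s, rfl, bPair_degN_zero M s⟩
      · rintro ⟨a, rfl, ha⟩
        exact ⟨Quot.mk _ ⟨a.V, a.j⟩, (mk_eq_bPair_of_degN_zero M ha).symm⟩
  · exact Function.LeftInverse.injective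
      (g := Quot.lift (degOneComponent M) fun _ _ => degOneComponent_sound M)
      (degOneComponent_thetaPre M)
  · ext cl
    constructor
    · rintro ⟨x, rfl⟩
      exact ⟨_, rfl, thetaPre_degN_one M x⟩
    · rintro ⟨a, rfl, ha⟩
      exact ⟨_, (mk_eq_thetaPre_of_degN_one M ha).symm⟩

/-- The unique map of semi-Tambara functors `sA → sT(M)` from the
Burnside semi-Mackey functor induces an isomorphism of semi-Mackey functors
`sA ≅ sT⁰(M)` (explicitly, `[A → Y] ↦ [(∅ → A → Y, 0)]`), and the universal map
`θ_M : M → sT(M)` induces an isomorphism of semi-Mackey functors `M ≅ sT¹(M)`. -/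
theorem statement6 [Finite G] (M : SemiMackey G) :
    -- `sA ≅ sT⁰(M)`
    (∀ (Y : FinGSet G) (s t : BurnPre G Y), BurnIso s t →
      Quot.mk (STRel M Y) (bPair M s) = Quot.mk (STRel M Y) (bPair M t)) ∧
    (∀ Y : FinGSet G, ∃ e0 : Quot (@BurnIso G _ Y) → sT M Y,
      (∀ s : BurnPre G Y, e0 (Quot.mk _ s) = Quot.mk (STRel M Y) (bPair M s)) ∧
      Function.Injective e0 ∧
      Set.range e0 = {cl : sT M Y | ∃ a : PreT M Y, Quot.mk (STRel M Y) a = cl ∧ DegN 0 a}) ∧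
    -- this identification commutes with transfers and restrictions
    (∀ {Y Z : FinGSet G} (f : Y.carrier →[G] Z.carrier) (s : BurnPre G Y),
      Quot.mk (STRel M Z) (bPair M ⟨s.A, gcomp f s.f⟩) =
        Quot.mk (STRel M Z) (trPre M f (bPair M s))) ∧
    (∀ {Y Z : FinGSet G} (f : Z.carrier →[G] Y.carrier) (s : BurnPre G Y),
      Quot.mk (STRel M Z) (bPair M ⟨mkG G (Pb s.f f), Pb.sndHom s.f f⟩) =
        Quot.mk (STRel M Z) (resPre M f (bPair M s))) ∧
    -- `M ≅ sT¹(M)` via `θ_M`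
    (∀ Y : FinGSet G,
      Function.Injective (fun x : M.obj Y => Quot.mk (STRel M Y) (thetaPre M Y x)) ∧
      Set.range (fun x : M.obj Y => Quot.mk (STRel M Y) (thetaPre M Y x)) =
        {cl : sT M Y | ∃ a : PreT M Y, Quot.mk (STRel M Y) a = cl ∧ DegN 1 a}) :=
  statement6_general M

end Tamb
end Tamb
end
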